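/- arXiv:1810.01397 — 8 statements merged into one kernel-verified Lean document; each statement's English description precedes it below -/
import Mathlib

section
/- Let B : [0,T] × Ω → ℝ³ be continuously differentiable in time and continuously differentiable in space, and u : [0,T] × Ω → ℝ³ be continuously differentiable in space, such that for all (t,x) and each i ∈ {1,2,3}: ∂_t B_i = B_j ∂_j u_i − (1/2) B_i ∂_j u_j − (1/2) u_j ∂_j B_i − (1/2) ∂_j(u_j B_i). Then for every t ∈ [0,T]: ∫_Ω B · ∂_t B = ∫_Ω ( B_i B_j ∂_j u_i − (1/2) B_i B_i ∂_j u_j ) − (1/2) ∫_{∂Ω} |B|² (u·ν). -/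
open MeasureTheory

/-- Partial derivative in the `j`-th spatial coordinate direction. -/
noncomputable def pd (f : (Fin 3 → ℝ) → ℝ) (j : Fin 3) (x : Fin 3 → ℝ) : ℝ :=
  fderiv ℝ f x (Pi.single j 1)

/-- Two-dimensional integral over the face of the box `[a,b] ⊆ ℝ³` obtained by freezing
the `j`-th coordinate at the value `c`. -/
noncomputable def faceIntegral (a b : Fin 3 → ℝ) (j : Fin 3) (c : ℝ)
    (f : (Fin 3 → ℝ) → ℝ) : ℝ :=
  ∫ y in Set.Icc (fun i => a (j.succAbove i)) (fun i => b (j.succAbove i)),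
    f (Fin.insertNth (α := fun _ => ℝ) j c y)

/-- Integral over the boundary of the box `[a,b] ⊆ ℝ³` of a function `g x ν` of the
point `x` and the outward unit normal `ν`, as the sum of the integrals over the six faces. -/
noncomputable def bdryIntegral (a b : Fin 3 → ℝ)
    (g : (Fin 3 → ℝ) → (Fin 3 → ℝ) → ℝ) : ℝ :=
  ∑ j, (faceIntegral a b j (b j) (fun x => g x (Pi.single j 1))
      + faceIntegral a b j (a j) (fun x => g x (Pi.single j (-1))))

lemma pd_mul (f g : (Fin 3 → ℝ) → ℝ) (j : Fin 3) (x : Fin 3 → ℝ)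
    (hf : DifferentiableAt ℝ f x) (hg : DifferentiableAt ℝ g x) :
    pd (fun y => f y * g y) j x = f x * pd g j x + g x * pd f j x := by
  simp [pd, fderiv_fun_mul hf hg]

lemma pd_sum (f : Fin 3 → (Fin 3 → ℝ) → ℝ) (j : Fin 3) (x : Fin 3 → ℝ)
    (hf : ∀ i, DifferentiableAt ℝ (f i) x) :
    pd (fun y => ∑ i, f i y) j x = ∑ i, pd (f i) j x := by
  simp [pd, fderiv_fun_sum (fun i _ => hf i)]

lemma pd_continuous (f : (Fin 3 → ℝ) → ℝ) (hf : ContDiff ℝ 1 f) (j : Fin 3) :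
    Continuous (fun x => pd f j x) :=
  (hf.continuous_fderiv one_ne_zero).clm_apply continuous_const


/-- Energy rate of the split form of the linear induction equation on a box `Ω = [a,b]`:
`∫_Ω B ⬝ ∂_t B = ∫_Ω (B_i B_j ∂_j u_i - ½ B_i B_i ∂_j u_j) - ½ ∫_{∂Ω} |B|² (u⋅ν)`. -/
theorem energy_rate_transport (T : ℝ) (hT : 0 ≤ T) (a b : Fin 3 → ℝ)
    (hab : ∀ i, a i < b i)
    (B u : ℝ → (Fin 3 → ℝ) → Fin 3 → ℝ)
    (hB : ∀ i, ContDiff ℝ 1 (fun p : ℝ × (Fin 3 → ℝ) => B p.1 p.2 i))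
    (hu : ∀ t, ∀ i, ContDiff ℝ 1 (fun x => u t x i))
    (hpde : ∀ t ∈ Set.Icc (0:ℝ) T, ∀ x ∈ Set.Icc a b, ∀ i,
      deriv (fun s => B s x i) t
        = (∑ j, B t x j * pd (fun y => u t y i) j x)
          - (1/2) * B t x i * (∑ j, pd (fun y => u t y j) j x)
          - (1/2) * (∑ j, u t x j * pd (fun y => B t y i) j x)
          - (1/2) * (∑ j, pd (fun y => u t y j * B t y i) j x)) :
    ∀ t ∈ Set.Icc (0:ℝ) T,
      (∫ x in Set.Icc a b, ∑ i, B t x i * deriv (fun s => B s x i) t)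
        = (∫ x in Set.Icc a b,
            (∑ i, ∑ j, B t x i * B t x j * pd (fun y => u t y i) j x)
              - (1/2) * (∑ i, B t x i * B t x i) * (∑ j, pd (fun y => u t y j) j x))
          - (1/2) * bdryIntegral a b
              (fun x ν => (∑ i, B t x i * B t x i) * (∑ j, u t x j * ν j)) := by
  intro t ht
  have hle : a ≤ b := fun i => (hab i).le
  -- spatial regularity of B at time t
  have hBt : ∀ i, ContDiff ℝ 1 (fun x => B t x i) := fun i =>
    (hB i).comp (contDiff_const.prodMk contDiff_id)
  -- the flux field F j x = u j x * |B x|²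
  set S : (Fin 3 → ℝ) → ℝ := fun x => ∑ i, B t x i * B t x i with hS
  have hScd : ContDiff ℝ 1 S := ContDiff.sum fun i _ => (hBt i).mul (hBt i)
  set F : Fin 3 → (Fin 3 → ℝ) → ℝ := fun j x => u t x j * S x with hF
  have hFcd : ∀ j, ContDiff ℝ 1 (F j) := fun j => (hu t j).mul hScd
  -- derivative computations
  have hprod : ∀ (x : Fin 3 → ℝ) (i j : Fin 3),
      pd (fun y => u t y j * B t y i) j x
        = u t x j * pd (fun y => B t y i) j x + B t x i * pd (fun y => u t y j) j x :=
    fun x i j => pd_mul _ _ _ _ ((hu t j).differentiable one_ne_zero x)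
      ((hBt i).differentiable one_ne_zero x)
  have hFpd : ∀ (x : Fin 3 → ℝ) (j : Fin 3),
      pd (F j) j x
        = u t x j * (∑ i, (B t x i * pd (fun y => B t y i) j x
              + B t x i * pd (fun y => B t y i) j x))
          + S x * pd (fun y => u t y j) j x := by
    intro x j
    have h1 : pd (F j) j x = u t x j * pd S j x + S x * pd (fun y => u t y j) j x :=
      pd_mul _ _ _ _ ((hu t j).differentiable one_ne_zero x) (hScd.differentiable one_ne_zero x)
    have h2 : pd S j x = ∑ i, (B t x i * pd (fun y => B t y i) j x
        + B t x i * pd (fun y => B t y i) j x) := by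
      rw [hS]
      rw [pd_sum _ _ _ (fun i => ((hBt i).differentiable one_ne_zero x).fun_mul
        ((hBt i).differentiable one_ne_zero x))]
      exact Finset.sum_congr rfl fun i _ => pd_mul _ _ _ _
        ((hBt i).differentiable one_ne_zero x) ((hBt i).differentiable one_ne_zero x)
    rw [h1, h2]
  -- pointwise identity on the box
  have key : ∀ x ∈ Set.Icc a b,
      (∑ i, B t x i * deriv (fun s => B s x i) t)
        = ((∑ i, ∑ j, B t x i * B t x j * pd (fun y => u t y i) j x)
            - (1/2) * S x * (∑ j, pd (fun y => u t y j) j x))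
          - (1/2) * ∑ j, pd (F j) j x := by
    intro x hx
    simp only [hpde t ht x hx, hprod x, hFpd x, hS]
    simp only [Fin.sum_univ_three]
    ring
  -- divergence theorem
  have hdivcont : Continuous (fun x => ∑ j, pd (F j) j x) :=
    continuous_finset_sum _ fun j _ => pd_continuous _ (hFcd j) j
  have hdiv :
      (∫ x in Set.Icc a b, ∑ j, pd (F j) j x)
        = ∑ j : Fin 3,
            ((∫ y in Set.Icc (a ∘ j.succAbove) (b ∘ j.succAbove),
                F j (j.insertNth (b j) y))
              - ∫ y in Set.Icc (a ∘ j.succAbove) (b ∘ j.succAbove),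
                F j (j.insertNth (a j) y)) := by
    exact integral_divergence_of_hasFDerivAt_off_countable' (n := 2) a b hle F
      (fun j x => fderiv ℝ (F j) x) ∅ Set.countable_empty
      (fun j => ((hFcd j).continuous).continuousOn)
      (fun x _ j => ((hFcd j).differentiable one_ne_zero x).hasFDerivAt)
      (hdivcont.integrableOn_Icc)
  -- boundary integral equals the divergence-theorem RHS
  have hbd : bdryIntegral a b
      (fun x ν => (∑ i, B t x i * B t x i) * (∑ j, u t x j * ν j))
        = ∑ j : Fin 3,
            ((∫ y in Set.Icc (a ∘ j.succAbove) (b ∘ j.succAbove),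
                F j (j.insertNth (b j) y))
              - ∫ y in Set.Icc (a ∘ j.succAbove) (b ∘ j.succAbove),
                F j (j.insertNth (a j) y)) := by
    unfold bdryIntegral faceIntegral
    refine Finset.sum_congr rfl fun j _ => ?_
    have e1 : ∀ x : Fin 3 → ℝ,
        (∑ i, B t x i * B t x i) * (∑ k, u t x k * (Pi.single j (1:ℝ) : Fin 3 → ℝ) k) = F j x := by
      intro x
      simp [hF, Pi.single_apply, mul_ite, Finset.mul_sum, hS]
      rw [Finset.sum_mul]
      exact Finset.sum_congr rfl fun i _ => by ring
    have e2 : ∀ x : Fin 3 → ℝ,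
        (∑ i, B t x i * B t x i) * (∑ k, u t x k * (Pi.single j (-1:ℝ) : Fin 3 → ℝ) k) = -(F j x) := by
      intro x
      simp [hF, Pi.single_apply, mul_ite, Finset.mul_sum, hS]
      rw [Finset.sum_mul]
      exact Finset.sum_congr rfl fun i _ => by ring
    simp only [e1, e2, integral_neg]
    rw [sub_eq_add_neg]
    rfl
  -- put it all together
  have hGcont : Continuous (fun x =>
      (∑ i, ∑ j, B t x i * B t x j * pd (fun y => u t y i) j x)
        - (1/2) * S x * (∑ j, pd (fun y => u t y j) j x)) := by
    refine Continuous.sub ?_ ?_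
    · exact continuous_finset_sum _ fun i _ => continuous_finset_sum _ fun j _ =>
        (((hBt i).continuous.mul (hBt j).continuous).mul
          (pd_continuous _ (hu t i) j))
    · exact (continuous_const.mul hScd.continuous).mul
        (continuous_finset_sum _ fun j _ => pd_continuous _ (hu t j) j)
  calc
    (∫ x in Set.Icc a b, ∑ i, B t x i * deriv (fun s => B s x i) t)
        = ∫ x in Set.Icc a b,
            (((∑ i, ∑ j, B t x i * B t x j * pd (fun y => u t y i) j x)
              - (1/2) * S x * (∑ j, pd (fun y => u t y j) j x))
              - (1/2) * ∑ j, pd (F j) j x) :=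
      setIntegral_congr_fun measurableSet_Icc key
    _ = (∫ x in Set.Icc a b,
            ((∑ i, ∑ j, B t x i * B t x j * pd (fun y => u t y i) j x)
              - (1/2) * S x * (∑ j, pd (fun y => u t y j) j x)))
          - (1/2) * ∫ x in Set.Icc a b, ∑ j, pd (F j) j x := by
      rw [integral_sub (hGcont.integrableOn_Icc)
        ((continuous_const.fun_mul hdivcont).integrableOn_Icc), MeasureTheory.integral_const_mul]
    _ = _ := by rw [hdiv, ← hbd]
end

section
/- In a three-dimensional SBP framework, let u(t) = (u₁(t),u₂(t),u₃(t)) and boundary data B^b(t) = (B^b₁(t),B^b₂(t),B^b₃(t)) be continuous families of grid-function triples, and for each j define the inflow indicator χ_j(t) ∈ {0,1}^ι by χ_{j,a}(t) = 1 iff (E_j)_{aa} ≠ 0 and ν_{j,a} u_{j,a}(t) < 0. Suppose B(t) = (B₁(t),B₂(t),B₃(t)) is differentiable and solves, for each i, ∂_t B_i = B_j ∘ D_j u_i − (1/2) B_i ∘ D_j u_j − (1/2) u_j ∘ D_j B_i − (1/2) D_j(u_j ∘ B_i) + M⁻¹ E_j ( χ_j ∘ u_j ∘ (B_i − B^b_i)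 ). Then for every t: d/dt ‖B(t)‖_M² = 2 B_iᵀ M (B_j ∘ D_j u_i) − B_iᵀ M (B_i ∘ D_j u_j) − B_iᵀ E_j (u_j ∘ B_i) + 2 B_iᵀ E_j ( χ_j ∘ u_j ∘ (B_i − B^b_i) ). -/
open Matrix


private lemma dot_mulVec_swap {ι : Type} [Fintype ι] (A : Matrix ι ι ℝ) (x y : ι → ℝ) :
    x ⬝ᵥ A.mulVec y = y ⬝ᵥ Aᵀ.mulVec x := by
  simp only [dotProduct, mulVec, Matrix.transpose_apply, Finset.mul_sum]
  rw [Finset.sum_comm]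
  exact Finset.sum_congr rfl fun a _ => Finset.sum_congr rfl fun b _ => by ring

private lemma diag_mulVec {ι : Type} [Fintype ι] [DecidableEq ι] {M : Matrix ι ι ℝ}
    (h : M.IsDiag) (w : ι → ℝ) (a : ι) : M.mulVec w a = M a a * w a := by
  rw [mulVec, dotProduct, Finset.sum_eq_single a]
  · intro b _ hb; rw [h (Ne.symm hb), zero_mul]
  · exact fun hc => absurd (Finset.mem_univ a) hc

private lemma sbp_key {ι : Type} [Fintype ι] [DecidableEq ι]
    {M D E : Matrix ι ι ℝ} (hMdiag : M.IsDiag) (hSBP : M * D + Dᵀ * M = E)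
    (v u : ι → ℝ) :
    (∑ a, v a * (M a a * (u a * D.mulVec v a)))
      + ∑ a, v a * (M a a * D.mulVec (fun c => u c * v c) a)
    = v ⬝ᵥ E.mulVec (fun a => u a * v a) := by
  have hMsymm : Mᵀ = M := by
    ext a b
    by_cases h : a = b
    · subst h; rfl
    · rw [transpose_apply, hMdiag h, hMdiag (Ne.symm h)]
  have h1 : (∑ a, v a * (M a a * (u a * D.mulVec v a)))
      = v ⬝ᵥ (Dᵀ * M).mulVec (fun a => u a * v a) := by
    have : (∑ a, v a * (M a a * (u a * D.mulVec v a)))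
        = (fun a => u a * v a) ⬝ᵥ M.mulVec (D.mulVec v) := by
      rw [dotProduct]
      exact Finset.sum_congr rfl fun a _ => by rw [diag_mulVec hMdiag]; ring
    rw [this, mulVec_mulVec, dot_mulVec_swap, transpose_mul, hMsymm]
  have h2 : (∑ a, v a * (M a a * D.mulVec (fun c => u c * v c) a))
      = v ⬝ᵥ (M * D).mulVec (fun a => u a * v a) := by
    rw [dotProduct, ← mulVec_mulVec]
    exact Finset.sum_congr rfl fun a _ => by rw [diag_mulVec hMdiag]
  rw [h1, h2, ← dotProduct_add, ← add_mulVec, add_comm (Dᵀ * M), hSBP]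

/-- Semidiscrete energy rate identity for the split-form SBP semidiscretisation of the
linear induction equation with weakly imposed inflow boundary conditions:
`d/dt ‖B‖_M² = 2 B_iᵀ M (B_j ∘ D_j u_i) − B_iᵀ M (B_i ∘ D_j u_j) − B_iᵀ E_j (u_j ∘ B_i)
  + 2 B_iᵀ E_j (χ_j ∘ u_j ∘ (B_i − B^b_i))` (summation over `i, j`). -/
theorem semidiscrete_energy_rate_transport
    {ι : Type} [Fintype ι] [DecidableEq ι]
    (M : Matrix ι ι ℝ) (hMdiag : M.IsDiag) (hMpos : M.PosDef)
    (D E : Fin 3 → Matrix ι ι ℝ)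
    (hEdiag : ∀ j, (E j).IsDiag)
    (hSBP : ∀ j, M * D j + (D j)ᵀ * M = E j)
    (u Bb B : ℝ → Fin 3 → ι → ℝ)
    (hu : ∀ j a, Continuous fun t => u t j a)
    (hBb : ∀ i a, Continuous fun t => Bb t i a)
    (hB : ∀ i a, Differentiable ℝ fun t => B t i a)
    (χ : ℝ → Fin 3 → ι → ℝ)
    (hχ : ∀ t j a, χ t j a
      = if (E j) a a ≠ 0 ∧ Real.sign ((E j) a a) * u t j a < 0 then 1 else 0)
    (hode : ∀ t, ∀ i, ∀ a, deriv (fun s => B s i a) t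
      = ∑ j, (B t j a * (D j).mulVec (u t i) a
          - (1/2) * B t i a * (D j).mulVec (u t j) a
          - (1/2) * u t j a * (D j).mulVec (B t i) a
          - (1/2) * (D j).mulVec (fun c => u t j c * B t i c) a
          + (M⁻¹ * E j).mulVec (fun c => χ t j c * u t j c * (B t i c - Bb t i c)) a)) :
    ∀ t, deriv (fun s => ∑ i, B s i ⬝ᵥ M.mulVec (B s i)) t
      = 2 * (∑ i, ∑ j, B t i ⬝ᵥ M.mulVec (fun a => B t j a * (D j).mulVec (u t i) a))
        - (∑ i, ∑ j, B t i ⬝ᵥ M.mulVec (fun a => B t i a * (D j).mulVec (u t j) a))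
        - (∑ i, ∑ j, B t i ⬝ᵥ (E j).mulVec (fun a => u t j a * B t i a))
        + 2 * (∑ i, ∑ j, B t i ⬝ᵥ (E j).mulVec
            (fun a => χ t j a * u t j a * (B t i a - Bb t i a))) := by
  intro t
  have hMsymm : Mᵀ = M := by
    ext a b
    by_cases h : a = b
    · subst h; rfl
    · rw [transpose_apply, hMdiag h, hMdiag (Ne.symm h)]
  have hMinv : M * M⁻¹ = 1 :=
    Matrix.mul_nonsing_inv M (isUnit_iff_ne_zero.mpr hMpos.det_pos.ne')
  set B' : Fin 3 → ι → ℝ := fun i a => deriv (fun s => B s i a) t with hB'def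
  -- Step 1: derivative of the energy
  have key : HasDerivAt (fun s => ∑ i, B s i ⬝ᵥ M.mulVec (B s i))
      (∑ i, (B' i ⬝ᵥ M.mulVec (B t i) + B t i ⬝ᵥ M.mulVec (B' i))) t := by
    have hfun : ∀ s, (∑ i, B s i ⬝ᵥ M.mulVec (B s i))
        = ∑ i, ∑ a, ∑ b, B s i a * (M a b * B s i b) := by
      intro s
      simp only [dotProduct, mulVec, Finset.mul_sum]
    have hval : (∑ i, (B' i ⬝ᵥ M.mulVec (B t i) + B t i ⬝ᵥ M.mulVec (B' i)))
        = ∑ i, ∑ a, ∑ b, (B' i a * (M a b * B t i b) + B t i a * (M a b * B' i b)) := by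
      simp only [dotProduct, mulVec, Finset.mul_sum, Finset.sum_add_distrib]
    rw [funext hfun, hval]
    apply HasDerivAt.fun_sum; intro i _
    apply HasDerivAt.fun_sum; intro a _
    apply HasDerivAt.fun_sum; intro b _
    exact ((hB i a t).hasDerivAt).mul (((hB i b t).hasDerivAt).const_mul (M a b))
  have hderiv : deriv (fun s => ∑ i, B s i ⬝ᵥ M.mulVec (B s i)) t
      = ∑ i, 2 * (B t i ⬝ᵥ M.mulVec (B' i)) := by
    rw [key.deriv]
    refine Finset.sum_congr rfl fun i _ => ?_
    rw [dot_mulVec_swap, hMsymm]; ring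
  rw [hderiv]
  -- Step 2: per-i expansion using the ODE
  have hper : ∀ i, B t i ⬝ᵥ M.mulVec (B' i)
      = ∑ j, ((B t i ⬝ᵥ M.mulVec (fun a => B t j a * (D j).mulVec (u t i) a))
          - (1/2) * (B t i ⬝ᵥ M.mulVec (fun a => B t i a * (D j).mulVec (u t j) a))
          - (1/2) * (B t i ⬝ᵥ (E j).mulVec (fun a => u t j a * B t i a))
          + (B t i ⬝ᵥ (E j).mulVec (fun a => χ t j a * u t j a * (B t i a - Bb t i a)))) := by
    intro i
    have step1 : B t i ⬝ᵥ M.mulVec (B' i)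
        = ∑ j, ∑ a, B t i a * (M a a *
            (B t j a * (D j).mulVec (u t i) a
              - (1/2) * B t i a * (D j).mulVec (u t j) a
              - (1/2) * u t j a * (D j).mulVec (B t i) a
              - (1/2) * (D j).mulVec (fun c => u t j c * B t i c) a
              + (M⁻¹ * E j).mulVec (fun c => χ t j c * u t j c * (B t i c - Bb t i c)) a)) := by
      rw [dotProduct, Finset.sum_comm]
      refine Finset.sum_congr rfl fun a _ => ?_
      rw [diag_mulVec hMdiag, hB'def]
      simp only [hode t i a, Finset.mul_sum]
    rw [step1]
    refine Finset.sum_congr rfl fun j _ => ?_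
    have split : (∑ a, B t i a * (M a a *
            (B t j a * (D j).mulVec (u t i) a
              - (1/2) * B t i a * (D j).mulVec (u t j) a
              - (1/2) * u t j a * (D j).mulVec (B t i) a
              - (1/2) * (D j).mulVec (fun c => u t j c * B t i c) a
              + (M⁻¹ * E j).mulVec (fun c => χ t j c * u t j c * (B t i c - Bb t i c)) a)))
        = (∑ a, B t i a * (M a a * (B t j a * (D j).mulVec (u t i) a)))
          - (1/2) * (∑ a, B t i a * (M a a * (B t i a * (D j).mulVec (u t j) a)))
          - (1/2) * ((∑ a, B t i a * (M a a * (u t j a * (D j).mulVec (B t i) a)))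
              + ∑ a, B t i a * (M a a * (D j).mulVec (fun c => u t j c * B t i c) a))
          + ∑ a, B t i a * (M a a *
              (M⁻¹ * E j).mulVec (fun c => χ t j c * u t j c * (B t i c - Bb t i c)) a) := by
      simp only [Finset.mul_sum, ← Finset.sum_add_distrib, ← Finset.sum_sub_distrib]
      exact Finset.sum_congr rfl fun a _ => by ring
    rw [split]
    congr 1
    · congr 2
      · refine Finset.sum_congr rfl fun a _ => ?_
        rw [diag_mulVec hMdiag]
      · congr 1
        refine Finset.sum_congr rfl fun a _ => ?_
        rw [diag_mulVec hMdiag]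
      · congr 1
        exact sbp_key hMdiag (hSBP j) (B t i) (u t j)
    · have : M.mulVec ((M⁻¹ * E j).mulVec
          (fun c => χ t j c * u t j c * (B t i c - Bb t i c)))
          = (E j).mulVec (fun c => χ t j c * u t j c * (B t i c - Bb t i c)) := by
        rw [mulVec_mulVec, ← mul_assoc, hMinv, one_mul]
      rw [dotProduct, ← this]
      refine Finset.sum_congr rfl fun a _ => ?_
      rw [diag_mulVec hMdiag]
  simp only [hper]
  simp only [Fin.sum_univ_three]
  ring
end

section
/- In a three-dimensional SBP framework, with continuous families u(t), B^b(t) of grid-function triples, inflow indicators χ_{j,a}(t) = 1 iff (E_j)_{aa} ≠ 0 and ν_{j,a} u_{j,a}(t) < 0, suppose B(t) solves ∂_t B_i = B_j ∘ D_j u_i − (1/2) B_i ∘ D_j u_j − (1/2) u_j ∘ D_j B_i − (1/2) D_j(u_j ∘ B_i) + M⁻¹ E_j ( χ_j ∘ u_j ∘ (B_i − B^b_i) ). Then: (i) d/dt ‖B(t)‖_M² ≤ 9 ‖Du(t)‖_∞ ‖B(t)‖_M² + ‖u(t)‖_∞ Σ_i B^b_i(t)ᵀ E B^b_i(t); and (ii)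 for all t ∈ [0,T], ‖B(t)‖_M² ≤ exp(9 K t) ( ‖B(0)‖_M² + ∫_0^t ‖u(s)‖_∞ Σ_i B^b_i(s)ᵀ E B^b_i(s) ds ), where K := sup_{s∈[0,T]} ‖Du(s)‖_∞. -/
open Matrix

set_option maxHeartbeats 1000000

section SBPAux
variable {ι : Type} [Fintype ι]

set_option linter.unusedSectionVars false

lemma sbp_diag_dot (M : Matrix ι ι ℝ) (hM : M.IsDiag) (v w : ι → ℝ) :
    v ⬝ᵥ M.mulVec w = ∑ a, M a a * (v a * w a) := by
  simp only [dotProduct, Matrix.mulVec, dotProduct, Finset.mul_sum]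
  refine Finset.sum_congr rfl fun a _ => ?_
  rw [Finset.sum_eq_single a]
  · ring
  · intro c _ hc; rw [hM (Ne.symm hc)]; ring
  · intro h; exact absurd (Finset.mem_univ a) h

lemma sbp_posdef_diag_pos [DecidableEq ι] (M : Matrix ι ι ℝ) (hM : M.PosDef) (a : ι) :
    0 < M a a := by
  exact hM.diag_pos

lemma sbp_L1 (M Dj Ej : Matrix ι ι ℝ) (hMdiag : M.IsDiag) (hEdiag : Ej.IsDiag)
    (hSBP : M * Dj + Djᵀ * M = Ej) (v w : ι → ℝ) :
    ∑ a, M a a * (v a * Dj.mulVec w a)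
      = (∑ a, Ej a a * (v a * w a)) - ∑ a, M a a * (Dj.mulVec v a * w a) := by
  have hMD : M * Dj = Ej - Djᵀ * M := eq_sub_of_add_eq hSBP
  calc ∑ a, M a a * (v a * Dj.mulVec w a)
      = v ⬝ᵥ M.mulVec (Dj.mulVec w) := (sbp_diag_dot M hMdiag _ _).symm
    _ = v ⬝ᵥ (Ej - Djᵀ * M).mulVec w := by rw [Matrix.mulVec_mulVec, hMD]
    _ = v ⬝ᵥ Ej.mulVec w - v ⬝ᵥ (Djᵀ * M).mulVec w := by
        rw [Matrix.sub_mulVec, dotProduct_sub]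
    _ = (∑ a, Ej a a * (v a * w a)) - (Dj.mulVec v) ⬝ᵥ M.mulVec w := by
        rw [sbp_diag_dot Ej hEdiag, ← Matrix.mulVec_mulVec,
          Matrix.dotProduct_mulVec v Djᵀ, Matrix.vecMul_transpose]
    _ = _ := by rw [sbp_diag_dot M hMdiag]

lemma sbp_L2 [DecidableEq ι] (M A : Matrix ι ι ℝ) (hMdiag : M.IsDiag) (hAdiag : A.IsDiag)
    (hdet : IsUnit M.det) (v w : ι → ℝ) :
    ∑ a, M a a * (v a * (M⁻¹ * A).mulVec w a) = ∑ a, A a a * (v a * w a) := by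
  calc ∑ a, M a a * (v a * (M⁻¹ * A).mulVec w a)
      = v ⬝ᵥ M.mulVec ((M⁻¹ * A).mulVec w) := (sbp_diag_dot M hMdiag _ _).symm
    _ = v ⬝ᵥ (M * (M⁻¹ * A)).mulVec w := by rw [Matrix.mulVec_mulVec]
    _ = v ⬝ᵥ A.mulVec w := by
        rw [← Matrix.mul_assoc, Matrix.mul_nonsing_inv M hdet, Matrix.one_mul]
    _ = _ := sbp_diag_dot A hAdiag _ _

lemma sbp_continuous_ciSup {κ : Type*} [Fintype κ] [Nonempty κ] {F : ℝ → κ → ℝ}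
    (h : ∀ k, Continuous fun t => F t k) : Continuous fun t => ⨆ k, F t k := by
  have heq : (fun t => ⨆ k, F t k)
      = fun t => Finset.univ.sup' Finset.univ_nonempty (fun k => F t k) := by
    funext t; rw [Finset.sup'_univ_eq_ciSup]
  rw [heq]
  exact Continuous.finset_sup'_apply _ fun k _ => h k

end SBPAux

lemma sbp_scalar1 (x y d K m : ℝ) (hm : 0 ≤ m) (hd : |d| ≤ K) :
    2 * m * x * y * d ≤ K * m * (x ^ 2 + y ^ 2) := by
  obtain ⟨h1, h2⟩ := abs_le.1 hd
  nlinarith [mul_nonneg hm (mul_nonneg (by linarith : (0:ℝ) ≤ K - d) (sq_nonneg (x + y))),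
    mul_nonneg hm (mul_nonneg (by linarith : (0:ℝ) ≤ K + d) (sq_nonneg (x - y)))]

lemma sbp_scalar2 (x d K m : ℝ) (hm : 0 ≤ m) (hd : |d| ≤ K) :
    -(m * x ^ 2 * d) ≤ K * m * x ^ 2 := by
  obtain ⟨h1, h2⟩ := abs_le.1 hd
  nlinarith [mul_nonneg hm (mul_nonneg (by linarith : (0:ℝ) ≤ K + d) (sq_nonneg x))]

lemma sbp_scalar3 (e u x z U χ : ℝ) (hU : |u| ≤ U)
    (hχ : χ = if e ≠ 0 ∧ Real.sign e * u < 0 then 1 else 0) :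
    -(e * u * x ^ 2) + 2 * e * χ * u * x * (x - z) ≤ U * |e| * z ^ 2 := by
  obtain ⟨hu1, hu2⟩ := abs_le.1 hU
  have hU0 : 0 ≤ U := (abs_nonneg u).trans hU
  rcases eq_or_ne e 0 with he | he
  · simp [he]
  rcases lt_or_gt_of_ne he with hneg | hpos
  · rw [abs_of_neg hneg]
    rw [Real.sign_of_neg hneg] at hχ
    by_cases hs : (-1 : ℝ) * u < 0
    · have hu : 0 < u := by linarith
      simp only [he, hs, and_true, if_pos, ne_eq, not_false_iff, if_true] at hχ
      subst hχ
      nlinarith [mul_nonneg (mul_nonneg (neg_nonneg.2 hneg.le) hu.le) (sq_nonneg (x - z)),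
        mul_le_mul_of_nonneg_left hu2 (mul_nonneg (neg_nonneg.2 hneg.le) (sq_nonneg z))]
    · have hu : u ≤ 0 := by linarith
      simp only [hs, and_false, if_false] at hχ
      subst hχ
      nlinarith [mul_nonneg (mul_nonneg (neg_nonneg.2 hneg.le) (neg_nonneg.2 hu)) (sq_nonneg x),
        mul_nonneg (mul_nonneg hU0 (neg_nonneg.2 hneg.le)) (sq_nonneg z)]
  · rw [abs_of_pos hpos]
    rw [Real.sign_of_pos hpos] at hχ
    by_cases hs : (1 : ℝ) * u < 0
    · have hu : u < 0 := by linarith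
      simp only [he, hs, and_true, if_pos, ne_eq, not_false_iff, if_true] at hχ
      subst hχ
      nlinarith [mul_nonneg (mul_nonneg hpos.le (neg_nonneg.2 hu.le)) (sq_nonneg (x - z)),
        mul_le_mul_of_nonneg_left (neg_le_abs u |>.trans hU : -u ≤ U)
          (mul_nonneg hpos.le (sq_nonneg z))]
    · have hu : 0 ≤ u := by linarith
      simp only [hs, and_false, if_false] at hχ
      subst hχ
      nlinarith [mul_nonneg (mul_nonneg hpos.le hu) (sq_nonneg x),
        mul_nonneg (mul_nonneg hU0 hpos.le) (sq_nonneg z)]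

lemma sbp_pointQ (m K U e x y z d1 d2 u χ : ℝ) (hm : 0 ≤ m)
    (hd1 : |d1| ≤ K) (hd2 : |d2| ≤ K) (hU : |u| ≤ U)
    (hχ : χ = if e ≠ 0 ∧ Real.sign e * u < 0 then 1 else 0) :
    2 * m * x * y * d1 - m * x ^ 2 * d2 - e * u * x ^ 2 + 2 * e * χ * u * x * (x - z)
      ≤ K * m * (x ^ 2 + y ^ 2) + K * m * x ^ 2 + U * |e| * z ^ 2 := by
  have h1 := sbp_scalar1 x y d1 K m hm hd1
  have h2 := sbp_scalar2 x d2 K m hm hd2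
  have h3 := sbp_scalar3 e u x z U χ hU hχ
  linarith


/-- `‖Du(t)‖_∞ = max_{i,j} ‖D_j u_i‖_∞`. -/
noncomputable def normDu {ι : Type} [Fintype ι]
    (D : Fin 3 → Matrix ι ι ℝ) (u : Fin 3 → ι → ℝ) : ℝ :=
  ⨆ i : Fin 3, ⨆ j : Fin 3, ⨆ a : ι, |(D j).mulVec (u i) a|

/-- `‖u‖_∞ = max_i ‖u_i‖_∞`. -/
noncomputable def normU {ι : Type} (u : Fin 3 → ι → ℝ) : ℝ :=
  ⨆ i : Fin 3, ⨆ a : ι, |u i a|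

/-- `E = Σ_j |E_j|` (entrywise absolute values). -/
def Eabs {ι : Type} (E : Fin 3 → Matrix ι ι ℝ) : Matrix ι ι ℝ :=
  Matrix.of fun a c => ∑ j, |(E j) a c|

/-- Energy rate estimate and energy estimate for the split-form SBP semidiscretisation of
the linear induction equation with weakly imposed inflow boundary conditions:
`d/dt ‖B‖_M² ≤ 9‖Du‖_∞ ‖B‖_M² + ‖u‖_∞ Σ_i (B^b_i)ᵀ E B^b_i` and the corresponding
Grönwall-type bound on `[0,T]`. -/
theorem semidiscrete_energy_estimate_transport
    {ι : Type} [Fintype ι] [DecidableEq ι] [Nonempty ι]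
    (T : ℝ) (hT : 0 ≤ T)
    (M : Matrix ι ι ℝ) (hMdiag : M.IsDiag) (hMpos : M.PosDef)
    (D E : Fin 3 → Matrix ι ι ℝ)
    (hEdiag : ∀ j, (E j).IsDiag)
    (hSBP : ∀ j, M * D j + (D j)ᵀ * M = E j)
    (u Bb B : ℝ → Fin 3 → ι → ℝ)
    (hu : ∀ j a, Continuous fun t => u t j a)
    (hBb : ∀ i a, Continuous fun t => Bb t i a)
    (hB : ∀ i a, Differentiable ℝ fun t => B t i a)
    (χ : ℝ → Fin 3 → ι → ℝ)
    (hχ : ∀ t j a, χ t j a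
      = if (E j) a a ≠ 0 ∧ Real.sign ((E j) a a) * u t j a < 0 then 1 else 0)
    (hode : ∀ t, ∀ i, ∀ a, deriv (fun s => B s i a) t
      = ∑ j, (B t j a * (D j).mulVec (u t i) a
          - (1/2) * B t i a * (D j).mulVec (u t j) a
          - (1/2) * u t j a * (D j).mulVec (B t i) a
          - (1/2) * (D j).mulVec (fun c => u t j c * B t i c) a
          + (M⁻¹ * E j).mulVec (fun c => χ t j c * u t j c * (B t i c - Bb t i c)) a)) :
    (∀ t, deriv (fun s => ∑ i, B s i ⬝ᵥ M.mulVec (B s i)) t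
      ≤ 9 * normDu D (u t) * (∑ i, B t i ⬝ᵥ M.mulVec (B t i))
        + normU (u t) * (∑ i, Bb t i ⬝ᵥ (Eabs E).mulVec (Bb t i)))
    ∧ ∀ t ∈ Set.Icc (0:ℝ) T,
        (∑ i, B t i ⬝ᵥ M.mulVec (B t i))
          ≤ Real.exp (9 * (⨆ s : Set.Icc (0:ℝ) T, normDu D (u ↑s)) * t)
            * ((∑ i, B 0 i ⬝ᵥ M.mulVec (B 0 i))
              + ∫ s in (0:ℝ)..t, normU (u s) * (∑ i, Bb s i ⬝ᵥ (Eabs E).mulVec (Bb s i))) := by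
  classical
  have hMaa : ∀ a, 0 < M a a := sbp_posdef_diag_pos M hMpos
  have hdet : IsUnit M.det := hMpos.det_pos.ne'.isUnit
  have hEabsdiag : (Eabs E).IsDiag := by
    intro a c hac
    simp only [Eabs, Matrix.of_apply]
    exact Finset.sum_eq_zero fun j _ => by rw [hEdiag j hac, abs_zero]
  -- derivative of the energy
  have hfder : ∀ t, HasDerivAt (fun s => ∑ i, B s i ⬝ᵥ M.mulVec (B s i))
      (∑ i, ∑ a, M a a * (2 * B t i a * deriv (fun s => B s i a) t)) t := by
    intro t
    have heq : (fun s => ∑ i, B s i ⬝ᵥ M.mulVec (B s i))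
        = fun s => ∑ i, ∑ a, M a a * (B s i a * B s i a) := by
      funext s; exact Finset.sum_congr rfl fun i _ => sbp_diag_dot M hMdiag _ _
    rw [heq]
    refine HasDerivAt.fun_sum fun i _ => HasDerivAt.fun_sum fun a _ => ?_
    have hB' := (((hB i a) t).hasDerivAt.mul ((hB i a) t).hasDerivAt).const_mul (M a a)
    exact hB'.congr_deriv (by ring)
  -- part (i)
  have mainineq : ∀ t, deriv (fun s => ∑ i, B s i ⬝ᵥ M.mulVec (B s i)) t
      ≤ 9 * normDu D (u t) * (∑ i, B t i ⬝ᵥ M.mulVec (B t i))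
        + normU (u t) * (∑ i, Bb t i ⬝ᵥ (Eabs E).mulVec (Bb t i)) := by
    intro t
    set K := normDu D (u t) with hKdef
    set U := normU (u t) with hUdef
    have hK : ∀ i j a, |(D j).mulVec (u t i) a| ≤ K := by
      intro i j a
      have h1 : |(D j).mulVec (u t i) a| ≤ ⨆ a, |(D j).mulVec (u t i) a| :=
        le_ciSup (f := fun a => |(D j).mulVec (u t i) a|) (Set.finite_range _).bddAbove a
      have h2 : (⨆ a, |(D j).mulVec (u t i) a|)
          ≤ ⨆ j, ⨆ a, |(D j).mulVec (u t i) a| :=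
        le_ciSup (f := fun j => ⨆ a, |(D j).mulVec (u t i) a|)
          (Set.finite_range _).bddAbove j
      have h3 : (⨆ j, ⨆ a, |(D j).mulVec (u t i) a|) ≤ K :=
        le_ciSup (f := fun i => ⨆ j, ⨆ a, |(D j).mulVec (u t i) a|)
          (Set.finite_range _).bddAbove i
      exact h1.trans (h2.trans h3)
    have hU : ∀ j a, |u t j a| ≤ U := by
      intro j a
      have h1 : |u t j a| ≤ ⨆ a, |u t j a| :=
        le_ciSup (f := fun a => |u t j a|) (Set.finite_range _).bddAbove a
      have h2 : (⨆ a, |u t j a|) ≤ U :=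
        le_ciSup (f := fun j => ⨆ a, |u t j a|) (Set.finite_range _).bddAbove j
      exact h1.trans h2
    -- step 1 : rewrite the derivative
    have hder : deriv (fun s => ∑ i, B s i ⬝ᵥ M.mulVec (B s i)) t
        = ∑ i, ∑ j : Fin 3, ∑ a,
            (2 * M a a * B t i a * B t j a * (D j).mulVec (u t i) a
              - M a a * B t i a ^ 2 * (D j).mulVec (u t j) a
              - (E j) a a * u t j a * B t i a ^ 2
              + 2 * (E j) a a * χ t j a * u t j a * B t i a * (B t i a - Bb t i a)) := by
      rw [(hfder t).deriv]
      refine Finset.sum_congr rfl fun i _ => ?_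
      calc ∑ a, M a a * (2 * B t i a * deriv (fun s => B s i a) t)
          = ∑ a, ∑ j : Fin 3, M a a * (2 * B t i a *
              (B t j a * (D j).mulVec (u t i) a
                - (1/2) * B t i a * (D j).mulVec (u t j) a
                - (1/2) * u t j a * (D j).mulVec (B t i) a
                - (1/2) * (D j).mulVec (fun c => u t j c * B t i c) a
                + (M⁻¹ * E j).mulVec (fun c => χ t j c * u t j c * (B t i c - Bb t i c)) a)) := by
            refine Finset.sum_congr rfl fun a _ => ?_
            rw [hode t i a, Finset.mul_sum, Finset.mul_sum]
        _ = ∑ j : Fin 3, ∑ a, M a a * (2 * B t i a *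
              (B t j a * (D j).mulVec (u t i) a
                - (1/2) * B t i a * (D j).mulVec (u t j) a
                - (1/2) * u t j a * (D j).mulVec (B t i) a
                - (1/2) * (D j).mulVec (fun c => u t j c * B t i c) a
                + (M⁻¹ * E j).mulVec (fun c => χ t j c * u t j c * (B t i c - Bb t i c)) a)) :=
            Finset.sum_comm
        _ = _ := by
            refine Finset.sum_congr rfl fun j _ => ?_
            have l1 := sbp_L1 M (D j) (E j) hMdiag (hEdiag j) (hSBP j) (B t i)
              (fun c => u t j c * B t i c)
            have l2 := sbp_L2 M (E j) hMdiag (hEdiag j) hdet (B t i)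
              (fun c => χ t j c * u t j c * (B t i c - Bb t i c))
            calc ∑ a, M a a * (2 * B t i a *
                  (B t j a * (D j).mulVec (u t i) a
                    - (1/2) * B t i a * (D j).mulVec (u t j) a
                    - (1/2) * u t j a * (D j).mulVec (B t i) a
                    - (1/2) * (D j).mulVec (fun c => u t j c * B t i c) a
                    + (M⁻¹ * E j).mulVec (fun c => χ t j c * u t j c * (B t i c - Bb t i c)) a))
                = (∑ a, (2 * M a a * B t i a * B t j a * (D j).mulVec (u t i) a
                      - M a a * B t i a ^ 2 * (D j).mulVec (u t j) a
                      - M a a * B t i a * u t j a * (D j).mulVec (B t i) a))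
                  - (∑ a, M a a * (B t i a * (D j).mulVec (fun c => u t j c * B t i c) a))
                  + 2 * ∑ a, M a a * (B t i a *
                      (M⁻¹ * E j).mulVec (fun c => χ t j c * u t j c * (B t i c - Bb t i c)) a) := by
                  rw [← Finset.sum_sub_distrib, Finset.mul_sum, ← Finset.sum_add_distrib]
                  refine Finset.sum_congr rfl fun a _ => ?_
                  ring
              _ = (∑ a, (2 * M a a * B t i a * B t j a * (D j).mulVec (u t i) a
                      - M a a * B t i a ^ 2 * (D j).mulVec (u t j) a
                      - M a a * B t i a * u t j a * (D j).mulVec (B t i) a))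
                  - ((∑ a, (E j) a a * (B t i a * (u t j a * B t i a)))
                      - ∑ a, M a a * ((D j).mulVec (B t i) a * (u t j a * B t i a)))
                  + 2 * ∑ a, (E j) a a * (B t i a *
                      (χ t j a * u t j a * (B t i a - Bb t i a))) := by
                  rw [l1, l2]
              _ = _ := by
                  rw [Finset.mul_sum, ← Finset.sum_sub_distrib, ← Finset.sum_sub_distrib,
                    ← Finset.sum_add_distrib]
                  refine Finset.sum_congr rfl fun a _ => ?_
                  ring
    rw [hder]
    -- step 2 : rewrite the right-hand side as a single sum over a
    have hfeq : (∑ i, B t i ⬝ᵥ M.mulVec (B t i)) = ∑ a, ∑ i, M a a * (B t i a * B t i a) := by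
      rw [Finset.sum_congr rfl fun i _ => sbp_diag_dot M hMdiag (B t i) (B t i)]
      exact Finset.sum_comm
    have hGeq : (∑ i, Bb t i ⬝ᵥ (Eabs E).mulVec (Bb t i))
        = ∑ a, ∑ i, (∑ j, |(E j) a a|) * (Bb t i a * Bb t i a) := by
      rw [Finset.sum_congr rfl fun i _ => sbp_diag_dot (Eabs E) hEabsdiag (Bb t i) (Bb t i)]
      rw [Finset.sum_comm]
      rfl
    rw [hfeq, hGeq, Finset.mul_sum, Finset.mul_sum, ← Finset.sum_add_distrib]
    rw [show (∑ i, ∑ j : Fin 3, ∑ a,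
        (2 * M a a * B t i a * B t j a * (D j).mulVec (u t i) a
          - M a a * B t i a ^ 2 * (D j).mulVec (u t j) a
          - (E j) a a * u t j a * B t i a ^ 2
          + 2 * (E j) a a * χ t j a * u t j a * B t i a * (B t i a - Bb t i a)))
      = ∑ a, ∑ i, ∑ j : Fin 3,
        (2 * M a a * B t i a * B t j a * (D j).mulVec (u t i) a
          - M a a * B t i a ^ 2 * (D j).mulVec (u t j) a
          - (E j) a a * u t j a * B t i a ^ 2
          + 2 * (E j) a a * χ t j a * u t j a * B t i a * (B t i a - Bb t i a)) from
      (Finset.sum_congr rfl fun i _ => Finset.sum_comm).trans Finset.sum_comm]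
    refine Finset.sum_le_sum fun a _ => ?_
    have hPQ : ∀ i j : Fin 3,
        2 * M a a * B t i a * B t j a * (D j).mulVec (u t i) a
          - M a a * B t i a ^ 2 * (D j).mulVec (u t j) a
          - (E j) a a * u t j a * B t i a ^ 2
          + 2 * (E j) a a * χ t j a * u t j a * B t i a * (B t i a - Bb t i a)
        ≤ K * M a a * (B t i a ^ 2 + B t j a ^ 2) + K * M a a * B t i a ^ 2
          + U * |(E j) a a| * Bb t i a ^ 2 := fun i j =>
      sbp_pointQ (M a a) K U ((E j) a a) (B t i a) (B t j a) (Bb t i a)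
        ((D j).mulVec (u t i) a) ((D j).mulVec (u t j) a) (u t j a) (χ t j a)
        (hMaa a).le (hK i j a) (hK j j a) (hU j a) (hχ t j a)
    simp only [Fin.sum_univ_three]
    linarith [hPQ 0 0, hPQ 0 1, hPQ 0 2, hPQ 1 0, hPQ 1 1, hPQ 1 2,
      hPQ 2 0, hPQ 2 1, hPQ 2 2]
  refine ⟨mainineq, ?_⟩
  -- part (ii)
  set K' := ⨆ s : Set.Icc (0:ℝ) T, normDu D (u ↑s) with hK'def
  have hnormDu_cont : Continuous fun t => normDu D (u t) := by
    unfold normDu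
    refine sbp_continuous_ciSup fun i => sbp_continuous_ciSup fun j =>
      sbp_continuous_ciSup fun a => Continuous.abs ?_
    simp only [Matrix.mulVec, dotProduct]
    exact continuous_finset_sum _ fun c _ => continuous_const.mul (hu i c)
  have hnormU_cont : Continuous fun t => normU (u t) := by
    unfold normU
    exact sbp_continuous_ciSup fun i => sbp_continuous_ciSup fun a => (hu i a).abs
  have hg_cont : Continuous fun r => normU (u r) * (∑ i, Bb r i ⬝ᵥ (Eabs E).mulVec (Bb r i)) := by
    refine hnormU_cont.mul (continuous_finset_sum _ fun i _ => ?_)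
    simp only [dotProduct, Matrix.mulVec]
    exact continuous_finset_sum _ fun a _ => (hBb i a).mul
      (continuous_finset_sum _ fun c _ => continuous_const.mul (hBb i c))
  have hnormU_nonneg : ∀ t, 0 ≤ normU (u t) := fun t =>
    Real.iSup_nonneg fun i => Real.iSup_nonneg fun a => abs_nonneg _
  have hGq_nonneg : ∀ t, 0 ≤ ∑ i, Bb t i ⬝ᵥ (Eabs E).mulVec (Bb t i) := by
    intro t
    refine Finset.sum_nonneg fun i _ => ?_
    rw [sbp_diag_dot (Eabs E) hEabsdiag]
    refine Finset.sum_nonneg fun a _ => mul_nonneg ?_ (mul_self_nonneg _)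
    simp only [Eabs, Matrix.of_apply]
    exact Finset.sum_nonneg fun j _ => abs_nonneg _
  have hg_nonneg : ∀ t, 0 ≤ normU (u t) * (∑ i, Bb t i ⬝ᵥ (Eabs E).mulVec (Bb t i)) :=
    fun t => mul_nonneg (hnormU_nonneg t) (hGq_nonneg t)
  have hf_nonneg : ∀ t, 0 ≤ ∑ i, B t i ⬝ᵥ M.mulVec (B t i) := by
    intro t
    refine Finset.sum_nonneg fun i _ => ?_
    rw [sbp_diag_dot M hMdiag]
    exact Finset.sum_nonneg fun a _ => mul_nonneg (hMaa a).le (mul_self_nonneg _)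
  have hK'_bdd : ∀ t ∈ Set.Icc (0:ℝ) T, normDu D (u t) ≤ K' := by
    intro t ht
    refine le_ciSup (f := fun s : Set.Icc (0:ℝ) T => normDu D (u ↑s)) ?_ ⟨t, ht⟩
    have himg : BddAbove ((fun t => normDu D (u t)) '' Set.Icc (0:ℝ) T) :=
      (isCompact_Icc.image hnormDu_cont).bddAbove
    rw [Set.image_eq_range] at himg
    exact himg
  have hK'0 : 0 ≤ K' := by
    refine le_trans ?_ (hK'_bdd 0 ⟨le_refl 0, hT⟩)
    exact Real.iSup_nonneg fun i => Real.iSup_nonneg fun j =>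
      Real.iSup_nonneg fun a => abs_nonneg _
  have hGd : ∀ t, HasDerivAt
      (fun r => ∫ s in (0:ℝ)..r, normU (u s) * (∑ i, Bb s i ⬝ᵥ (Eabs E).mulVec (Bb s i)))
      (normU (u t) * (∑ i, Bb t i ⬝ᵥ (Eabs E).mulVec (Bb t i))) t := fun t =>
    intervalIntegral.integral_hasDerivAt_right (hg_cont.intervalIntegrable _ _)
      hg_cont.stronglyMeasurable.stronglyMeasurableAtFilter hg_cont.continuousAt
  set φ : ℝ → ℝ := fun r => Real.exp (-(9 * K') * r) * (∑ i, B r i ⬝ᵥ M.mulVec (B r i))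
      - ∫ s in (0:ℝ)..r, normU (u s) * (∑ i, Bb s i ⬝ᵥ (Eabs E).mulVec (Bb s i)) with hφdef
  have hφd : ∀ r, HasDerivAt φ
      ((-(9 * K') * Real.exp (-(9 * K') * r)) * (∑ i, B r i ⬝ᵥ M.mulVec (B r i))
        + Real.exp (-(9 * K') * r) * deriv (fun s => ∑ i, B s i ⬝ᵥ M.mulVec (B s i)) r
        - normU (u r) * (∑ i, Bb r i ⬝ᵥ (Eabs E).mulVec (Bb r i))) r := by
    intro r
    have hexp : HasDerivAt (fun r => Real.exp (-(9 * K') * r))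
        (Real.exp (-(9 * K') * r) * (-(9 * K') * 1)) r :=
      ((hasDerivAt_id r).const_mul (-(9 * K'))).exp
    have hf' : HasDerivAt (fun s => ∑ i, B s i ⬝ᵥ M.mulVec (B s i))
        (deriv (fun s => ∑ i, B s i ⬝ᵥ M.mulVec (B s i)) r) r :=
      (hfder r).differentiableAt.hasDerivAt
    have := (hexp.mul hf').sub (hGd r)
    exact this.congr_deriv (by ring)
  have hφ_diff : Differentiable ℝ φ := fun r => (hφd r).differentiableAt
  have hφ_deriv_nonpos : ∀ r ∈ interior (Set.Icc (0:ℝ) T), deriv φ r ≤ 0 := by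
    intro r hr
    rw [interior_Icc] at hr
    rw [(hφd r).deriv]
    have hmain := mainineq r
    have hDu_le := hK'_bdd r ⟨hr.1.le, hr.2.le⟩
    have hfr := hf_nonneg r
    have hgr := hg_nonneg r
    have hexp1 : Real.exp (-(9 * K') * r) ≤ 1 :=
      Real.exp_le_one_iff.2 (by nlinarith [hr.1])
    have hexppos : (0:ℝ) < Real.exp (-(9 * K') * r) := Real.exp_pos _
    have h2 : deriv (fun s => ∑ i, B s i ⬝ᵥ M.mulVec (B s i)) r
        ≤ 9 * K' * (∑ i, B r i ⬝ᵥ M.mulVec (B r i))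
          + normU (u r) * (∑ i, Bb r i ⬝ᵥ (Eabs E).mulVec (Bb r i)) := by
      have h9 : 9 * normDu D (u r) * (∑ i, B r i ⬝ᵥ M.mulVec (B r i))
          ≤ 9 * K' * (∑ i, B r i ⬝ᵥ M.mulVec (B r i)) :=
        mul_le_mul_of_nonneg_right (by linarith) hfr
      linarith
    have h3 := mul_le_mul_of_nonneg_left h2 hexppos.le
    have h4 := mul_le_mul_of_nonneg_left hexp1 hgr
    nlinarith [h3, h4]
  have hanti : AntitoneOn φ (Set.Icc 0 T) :=
    antitoneOn_of_deriv_nonpos (convex_Icc 0 T) hφ_diff.continuous.continuousOn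
      hφ_diff.differentiableOn hφ_deriv_nonpos
  intro t ht
  have hle : φ t ≤ φ 0 := hanti (Set.left_mem_Icc.2 hT) ht ht.1
  have hφ0 : φ 0 = ∑ i, B 0 i ⬝ᵥ M.mulVec (B 0 i) := by
    simp [hφdef, intervalIntegral.integral_same]
  rw [hφ0, hφdef] at hle
  simp only [sub_le_iff_le_add] at hle
  have hexppos : (0:ℝ) < Real.exp (9 * K' * t) := Real.exp_pos _
  have hprod : Real.exp (9 * K' * t) * Real.exp (-(9 * K') * t) = 1 := by
    rw [← Real.exp_add, show 9 * K' * t + -(9 * K') * t = 0 by ring, Real.exp_zero]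
  have hmul := mul_le_mul_of_nonneg_left hle hexppos.le
  calc (∑ i, B t i ⬝ᵥ M.mulVec (B t i))
      = Real.exp (9 * K' * t) * Real.exp (-(9 * K') * t)
          * (∑ i, B t i ⬝ᵥ M.mulVec (B t i)) := by rw [hprod, one_mul]
    _ ≤ Real.exp (9 * K' * t)
          * ((∑ i, B 0 i ⬝ᵥ M.mulVec (B 0 i))
            + ∫ s in (0:ℝ)..t, normU (u s) * (∑ i, Bb s i ⬝ᵥ (Eabs E).mulVec (Bb s i))) := by
        rw [mul_assoc]
        exact mul_le_mul_of_nonneg_left (by linarith) hexppos.le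
end

section
/- For all vectors u, ν, B, J ∈ ℝ³, set s := (u/2 − J)·ν and let χ := 1 if s < 0 and χ := 0 otherwise. Then: (i) the boundary integrand identity ( (1/2)|B|² u + (B·J) B − |B|² J ) · ν = s |B|² + (B·ν)(J·B) holds; and (ii) the weakly imposed outflow boundary condition term satisfies −( s |B|² + (B·ν)(J·B) ) + ( χ s B + (B·ν) J ) · B = −(1−χ) s |B|² ≤ 0. -/
open scoped RealInnerProductSpace

/-- Pointwise computation for the outflow boundary condition of the Hall induction
equation: with `s = (u/2 − J)⋅ν` and `χ = 1` if `s < 0`, `χ = 0` otherwise,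
(i) `(½|B|² u + (B⋅J)B − |B|² J)⋅ν = s|B|² + (B⋅ν)(J⋅B)`, and
(ii) the weakly imposed outflow term satisfies
`−(s|B|² + (B⋅ν)(J⋅B)) + (χ s B + (B⋅ν)J)⋅B = −(1−χ) s |B|² ≤ 0`. -/
theorem hall_outflow_boundary_term (u ν B J : EuclideanSpace ℝ (Fin 3))
    (s : ℝ) (hs : s = ⟪(1/2 : ℝ) • u - J, ν⟫)
    (χ : ℝ) (hχ : χ = if s < 0 then 1 else 0) :
    (⟪((1/2) * ‖B‖ ^ 2) • u + ⟪B, J⟫ • B - (‖B‖ ^ 2) • J, ν⟫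
        = s * ‖B‖ ^ 2 + ⟪B, ν⟫ * ⟪J, B⟫)
    ∧ (-(s * ‖B‖ ^ 2 + ⟪B, ν⟫ * ⟪J, B⟫) + ⟪(χ * s) • B + ⟪B, ν⟫ • J, B⟫
        = -(1 - χ) * s * ‖B‖ ^ 2)
    ∧ -(1 - χ) * s * ‖B‖ ^ 2 ≤ 0 := by
  have hBB : ⟪B, B⟫ = ‖B‖ ^ 2 := real_inner_self_eq_norm_sq B
  refine ⟨?_, ?_, ?_⟩
  · simp only [hs, inner_sub_left, inner_add_left, inner_smul_left,
      starRingEnd_apply, star_trivial, real_inner_comm B ν, real_inner_comm B J]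
    ring
  · simp only [inner_add_left, inner_smul_left, starRingEnd_apply, star_trivial, hBB,
      real_inner_comm B ν]
    ring
  · rcases lt_or_ge s 0 with h | h
    · simp [hχ, h]
    · have : χ = 0 := by simp [hχ, not_lt.mpr h]
      rw [this]
      have := sq_nonneg ‖B‖
      nlinarith
end

section
/- Let ι be a finite index set with a designated boundary subset ∂ ⊆ ι, M ∈ ℝ^{ι×ι} diagonal positive definite, and for j ∈ {1,2,3} let D_j, E_j ∈ ℝ^{ι×ι} satisfy M D_j + D_jᵀ M = E_j with each E_j diagonal and (E_j)_{aa} = 0 for all a ∉ ∂, and D_j 𝟙 = 0 where 𝟙 is the all-ones vector. Let B = (B₁,B₂,B₃) ∈ (ℝ^ι)³ and φ ∈ ℝ^ι satisfy φ_a = 0 for all a ∈ ∂ and ( Σ_i D_i B_i + Σ_j D_j D_j φ )_a = 0 for all a ∉ ∂ (discrete Poisson equation with homogeneous Dirichlet boundary conditions, Laplacian obtained by applying the first-derivative operators twice). Then: (i) 𝟙ᵀ M D_i φ = 0 for each i, so the total magnetic field 𝟙ᵀ M (B_i + D_i φ) = 𝟙ᵀ M B_i is conserved componentwise; and (ii)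 Σ_i B_iᵀ M B_i = Σ_i (B_i + D_i φ)ᵀ M (B_i + D_i φ) + Σ_i (D_i φ)ᵀ M (D_i φ), so the magnetic energy can only decrease under B_i ↦ B_i + D_i φ. -/
open Matrix

/-- Divergence cleaning via the wide-stencil discrete Poisson equation with homogeneous
Dirichlet boundary conditions: the correction `B_i ↦ B_i + D_i φ` conserves the total
magnetic field and the magnetic energy can only decrease, indeed
`Σ_i B_iᵀ M B_i = Σ_i (B_i + D_i φ)ᵀ M (B_i + D_i φ) + Σ_i (D_i φ)ᵀ M (D_i φ)`. -/
theorem projection_wide_stencil_dirichlet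
    {ι : Type} [Fintype ι] [DecidableEq ι]
    (bset : Set ι)
    (M : Matrix ι ι ℝ) (hMdiag : M.IsDiag) (hMpos : M.PosDef)
    (D E : Fin 3 → Matrix ι ι ℝ)
    (hEdiag : ∀ j, (E j).IsDiag)
    (hEsupp : ∀ j, ∀ a ∉ bset, (E j) a a = 0)
    (hSBP : ∀ j, M * D j + (D j)ᵀ * M = E j)
    (hconsistent : ∀ j, (D j).mulVec (fun _ => (1:ℝ)) = 0)
    (B : Fin 3 → ι → ℝ) (φ : ι → ℝ)
    (hφbdry : ∀ a ∈ bset, φ a = 0)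
    (hpoisson : ∀ a ∉ bset,
      (∑ i, (D i).mulVec (B i) a) + (∑ j, (D j).mulVec ((D j).mulVec φ) a) = 0) :
    (∀ i, (fun _ => (1:ℝ)) ⬝ᵥ M.mulVec ((D i).mulVec φ) = 0)
    ∧ (∀ i, (fun _ => (1:ℝ)) ⬝ᵥ M.mulVec (fun a => B i a + (D i).mulVec φ a)
        = (fun _ => (1:ℝ)) ⬝ᵥ M.mulVec (B i))
    ∧ (∑ i, B i ⬝ᵥ M.mulVec (B i))
        = (∑ i, (fun a => B i a + (D i).mulVec φ a) ⬝ᵥ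
            M.mulVec (fun a => B i a + (D i).mulVec φ a))
          + (∑ i, (D i).mulVec φ ⬝ᵥ M.mulVec ((D i).mulVec φ)) := by
  classical
  have hMsym : Mᵀ = M := by
    ext a b
    by_cases h : a = b
    · subst h; rfl
    · rw [Matrix.transpose_apply, hMdiag h, hMdiag (Ne.symm h)]
  -- mulVec of diagonal matrices
  have hdiagMul : ∀ (A : Matrix ι ι ℝ), A.IsDiag → ∀ (v : ι → ℝ) (a : ι),
      A.mulVec v a = A a a * v a := by
    intro A hA v a
    rw [Matrix.mulVec, dotProduct, Finset.sum_eq_single a]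
    · intro b _ hb
      rw [hA (Ne.symm hb), zero_mul]
    · intro h; exact absurd (Finset.mem_univ a) h
  -- dot products with E and φ vanish
  have hφE : ∀ j (v : ι → ℝ), φ ⬝ᵥ (E j).mulVec v = 0 := by
    intro j v
    apply Finset.sum_eq_zero
    intro a _
    by_cases ha : a ∈ bset
    · rw [hφbdry a ha, zero_mul]
    · rw [hdiagMul (E j) (hEdiag j) v a, hEsupp j a ha, zero_mul, mul_zero]
  have hEφ : ∀ j (v : ι → ℝ), v ⬝ᵥ (E j).mulVec φ = 0 := by
    intro j v
    apply Finset.sum_eq_zero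
    intro a _
    by_cases ha : a ∈ bset
    · rw [hdiagMul (E j) (hEdiag j) φ a, hφbdry a ha, mul_zero, mul_zero]
    · rw [hdiagMul (E j) (hEdiag j) φ a, hEsupp j a ha, zero_mul, mul_zero]
  -- symmetry of the M-inner product
  have hsymdot : ∀ (u w : ι → ℝ), u ⬝ᵥ M.mulVec w = w ⬝ᵥ M.mulVec u := by
    intro u w
    rw [Matrix.dotProduct_mulVec, ← Matrix.mulVec_transpose, hMsym, dotProduct_comm]
  -- discrete integration by parts
  have hSBP' : ∀ j (u v : ι → ℝ),
      u ⬝ᵥ M.mulVec ((D j).mulVec v) + (D j).mulVec u ⬝ᵥ M.mulVec v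
        = u ⬝ᵥ (E j).mulVec v := by
    intro j u v
    have h := congrArg (fun A : Matrix ι ι ℝ => u ⬝ᵥ A.mulVec v) (hSBP j)
    simp only [Matrix.add_mulVec, dotProduct_add] at h
    rw [← h]
    congr 1
    · rw [Matrix.mulVec_mulVec]
    · rw [← Matrix.mulVec_mulVec, Matrix.dotProduct_mulVec u ((D j)ᵀ), Matrix.vecMul_transpose,
        Matrix.dotProduct_mulVec]
  -- part (i)
  have part1 : ∀ i, (fun _ => (1:ℝ)) ⬝ᵥ M.mulVec ((D i).mulVec φ) = 0 := by
    intro i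
    have h := hSBP' i (fun _ => (1:ℝ)) φ
    rw [hconsistent i, hEφ i] at h
    simpa using h
  refine ⟨part1, ?_, ?_⟩
  · intro i
    show (fun _ => (1:ℝ)) ⬝ᵥ M.mulVec (B i + (D i).mulVec φ) = _
    rw [Matrix.mulVec_add, dotProduct_add, part1, add_zero]
  -- energy identity
  · have hdotM : ∀ (w : ι → ℝ), φ ⬝ᵥ M.mulVec w = ∑ a, φ a * M a a * w a := by
      intro w
      apply Finset.sum_congr rfl
      intro a _
      rw [hdiagMul M hMdiag w a, mul_assoc]
    have hswap : ∀ (w : Fin 3 → ι → ℝ),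
        (∑ i, φ ⬝ᵥ M.mulVec (w i)) = ∑ a, φ a * M a a * (∑ i, w i a) := by
      intro w
      calc (∑ i, φ ⬝ᵥ M.mulVec (w i)) = ∑ i, ∑ a, φ a * M a a * w i a :=
            Finset.sum_congr rfl (fun i _ => hdotM (w i))
        _ = ∑ a, ∑ i, φ a * M a a * w i a := Finset.sum_comm
        _ = ∑ a, φ a * M a a * (∑ i, w i a) := by
            apply Finset.sum_congr rfl
            intro a _
            rw [Finset.mul_sum]
    have hzero : (∑ i, φ ⬝ᵥ M.mulVec ((D i).mulVec (B i)))
        + (∑ j, φ ⬝ᵥ M.mulVec ((D j).mulVec ((D j).mulVec φ))) = 0 := by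
      rw [hswap, hswap, ← Finset.sum_add_distrib]
      apply Finset.sum_eq_zero
      intro a _
      by_cases ha : a ∈ bset
      · rw [hφbdry a ha]; ring
      · rw [← mul_add, hpoisson a ha, mul_zero]
    have hcrossB : ∀ i, φ ⬝ᵥ M.mulVec ((D i).mulVec (B i))
        = -((D i).mulVec φ ⬝ᵥ M.mulVec (B i)) := by
      intro i
      have h := hSBP' i φ (B i)
      rw [hφE i] at h
      linarith
    have hcrossφ : ∀ i, φ ⬝ᵥ M.mulVec ((D i).mulVec ((D i).mulVec φ))
        = -((D i).mulVec φ ⬝ᵥ M.mulVec ((D i).mulVec φ)) := by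
      intro i
      have h := hSBP' i φ ((D i).mulVec φ)
      rw [hφE i] at h
      linarith
    have key : (∑ i, (D i).mulVec φ ⬝ᵥ M.mulVec (B i))
        + (∑ i, (D i).mulVec φ ⬝ᵥ M.mulVec ((D i).mulVec φ)) = 0 := by
      have h1 : (∑ i, φ ⬝ᵥ M.mulVec ((D i).mulVec (B i)))
          = -(∑ i, (D i).mulVec φ ⬝ᵥ M.mulVec (B i)) := by
        rw [← Finset.sum_neg_distrib]
        exact Finset.sum_congr rfl (fun i _ => hcrossB i)
      have h2 : (∑ j, φ ⬝ᵥ M.mulVec ((D j).mulVec ((D j).mulVec φ)))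
          = -(∑ j, (D j).mulVec φ ⬝ᵥ M.mulVec ((D j).mulVec φ)) := by
        rw [← Finset.sum_neg_distrib]
        exact Finset.sum_congr rfl (fun i _ => hcrossφ i)
      rw [h1, h2] at hzero
      linarith
    have hexpand : ∀ i, (fun a => B i a + (D i).mulVec φ a) ⬝ᵥ
        M.mulVec (fun a => B i a + (D i).mulVec φ a)
        = B i ⬝ᵥ M.mulVec (B i) + 2 * ((D i).mulVec φ ⬝ᵥ M.mulVec (B i))
          + (D i).mulVec φ ⬝ᵥ M.mulVec ((D i).mulVec φ) := by
      intro i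
      show (B i + (D i).mulVec φ) ⬝ᵥ M.mulVec (B i + (D i).mulVec φ) = _
      rw [Matrix.mulVec_add, dotProduct_add, add_dotProduct,
        add_dotProduct, hsymdot (B i) ((D i).mulVec φ)]
      ring
    rw [Finset.sum_congr rfl (fun i _ => hexpand i)]
    rw [Finset.sum_add_distrib, Finset.sum_add_distrib, ← Finset.mul_sum]
    linarith
end

section
/- Let ι be a finite index set with a designated boundary subset ∂ ⊆ ι, M ∈ ℝ^{ι×ι} diagonal positive definite, and for j ∈ {1,2,3} let D_j, E_j ∈ ℝ^{ι×ι} satisfy M D_j + D_jᵀ M = E_j with E_j diagonal, (E_j)_{aa} = 0 for a ∉ ∂, and D_j 𝟙 = 0. Assume in addition compatible narrow-stencil second-derivative operators: for each j there are matrices D_j^{(2)}, S_j and symmetric positive-semidefinite R_j with M D_j^{(2)} = −D_jᵀ M D_j + E_j S_j − R_j. Let B = (B₁,B₂,B₃) ∈ (ℝ^ι)³ and φ ∈ ℝ^ι satisfy φ_a = 0 for all a ∈ ∂ and ( Σ_i D_i B_i + Σ_j D_j^{(2)} φ )_a = 0 for all a ∉ ∂. Then: (i) 𝟙ᵀ M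 D_i φ = 0 for each i (total magnetic field conserved); and (ii) Σ_i B_iᵀ M B_i ≥ Σ_i (B_i + D_i φ)ᵀ M (B_i + D_i φ) + Σ_i (D_i φ)ᵀ M (D_i φ), so the magnetic energy can only decrease under B_i ↦ B_i + D_i φ. -/
open Matrix

/-- Divergence cleaning via the narrow-stencil discrete Poisson equation (compatible
second-derivative SBP operators `M D_j⁽²⁾ = −D_jᵀ M D_j + E_j S_j − R_j` with `R_j`
symmetric positive semidefinite) with homogeneous Dirichlet boundary conditions:
the correction `B_i ↦ B_i + D_i φ` conserves the total magnetic field and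
`Σ_i B_iᵀ M B_i ≥ Σ_i (B_i + D_i φ)ᵀ M (B_i + D_i φ) + Σ_i (D_i φ)ᵀ M (D_i φ)`,
so the magnetic energy can only decrease. -/
theorem projection_narrow_stencil_dirichlet
    {ι : Type} [Fintype ι] [DecidableEq ι]
    (bset : Set ι)
    (M : Matrix ι ι ℝ) (hMdiag : M.IsDiag) (hMpos : M.PosDef)
    (D E : Fin 3 → Matrix ι ι ℝ)
    (hEdiag : ∀ j, (E j).IsDiag)
    (hEsupp : ∀ j, ∀ a ∉ bset, (E j) a a = 0)
    (hSBP : ∀ j, M * D j + (D j)ᵀ * M = E j)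
    (hconsistent : ∀ j, (D j).mulVec (fun _ => (1:ℝ)) = 0)
    (D2 S R : Fin 3 → Matrix ι ι ℝ)
    (hR : ∀ j, (R j).PosSemidef)
    (hcompat : ∀ j, M * D2 j = -((D j)ᵀ * M * D j) + E j * S j - R j)
    (B : Fin 3 → ι → ℝ) (φ : ι → ℝ)
    (hφbdry : ∀ a ∈ bset, φ a = 0)
    (hpoisson : ∀ a ∉ bset,
      (∑ i, (D i).mulVec (B i) a) + (∑ j, (D2 j).mulVec φ a) = 0) :
    (∀ i, (fun _ => (1:ℝ)) ⬝ᵥ M.mulVec ((D i).mulVec φ) = 0)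
    ∧ (∀ i, (fun _ => (1:ℝ)) ⬝ᵥ M.mulVec (fun a => B i a + (D i).mulVec φ a)
        = (fun _ => (1:ℝ)) ⬝ᵥ M.mulVec (B i))
    ∧ (∑ i, B i ⬝ᵥ M.mulVec (B i))
        ≥ (∑ i, (fun a => B i a + (D i).mulVec φ a) ⬝ᵥ
            M.mulVec (fun a => B i a + (D i).mulVec φ a))
          + (∑ i, (D i).mulVec φ ⬝ᵥ M.mulVec ((D i).mulVec φ)) := by
  classical
  have hMsymm : Mᵀ = M := hMdiag.isSymm
  -- bilinear symmetry for M
  have hMbil : ∀ v w : ι → ℝ, v ⬝ᵥ M *ᵥ w = w ⬝ᵥ M *ᵥ v := by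
    intro v w
    rw [dotProduct_mulVec, ← mulVec_transpose, hMsymm, dotProduct_comm]
  -- E j annihilates φ
  have hEφ : ∀ j, E j *ᵥ φ = 0 := by
    intro j
    funext a
    simp only [mulVec, dotProduct, Pi.zero_apply]
    apply Finset.sum_eq_zero
    intro b _
    by_cases hb : b = a
    · subst hb
      by_cases ha : b ∈ bset
      · rw [hφbdry b ha, mul_zero]
      · rw [hEsupp j b ha, zero_mul]
    · rw [hEdiag j (Ne.symm hb), zero_mul]
  have hEdot : ∀ j (v : ι → ℝ), φ ⬝ᵥ E j *ᵥ v = 0 := by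
    intro j v
    rw [dotProduct_mulVec, ← mulVec_transpose, (hEdiag j).isSymm, hEφ j,
      zero_dotProduct]
  have hMD : ∀ j, M * D j = E j - (D j)ᵀ * M := fun j => eq_sub_of_add_eq (hSBP j)
  -- part 1
  have part1 : ∀ i, (fun _ => (1:ℝ)) ⬝ᵥ M.mulVec ((D i).mulVec φ) = 0 := by
    intro i
    rw [mulVec_mulVec, hMD i, sub_mulVec, dotProduct_sub, hEφ i, dotProduct_zero,
      ← mulVec_mulVec, dotProduct_mulVec, ← mulVec_transpose, transpose_transpose,
      hconsistent i, zero_dotProduct, sub_zero]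
  -- transfer of Dᵀ through the bilinear form
  have hDT : ∀ i (v : ι → ℝ), φ ⬝ᵥ ((D i)ᵀ * M) *ᵥ v = (D i *ᵥ φ) ⬝ᵥ M *ᵥ v := by
    intro i v
    rw [← mulVec_mulVec, dotProduct_mulVec (v := φ), ← mulVec_transpose,
      transpose_transpose]
  -- key: φᵀ M ⋅ (residual) = 0
  have hkey : φ ⬝ᵥ M *ᵥ ((∑ i, D i *ᵥ B i) + ∑ j, D2 j *ᵥ φ) = 0 := by
    apply Finset.sum_eq_zero
    intro a _
    by_cases ha : a ∈ bset
    · rw [hφbdry a ha, zero_mul]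
    · have hMa : (M *ᵥ ((∑ i, D i *ᵥ B i) + ∑ j, D2 j *ᵥ φ)) a = 0 := by
        simp only [mulVec, dotProduct]
        apply Finset.sum_eq_zero
        intro b _
        by_cases hb : b = a
        · subst hb
          have := hpoisson b ha
          simp only [Pi.add_apply, Finset.sum_apply] at this ⊢
          rw [this, mul_zero]
        · rw [hMdiag (Ne.symm hb), zero_mul]
      rw [hMa, mul_zero]
  -- compute each first-derivative term
  have hterm1 : ∀ i, φ ⬝ᵥ M *ᵥ (D i *ᵥ B i) = -((D i *ᵥ φ) ⬝ᵥ M *ᵥ B i) := by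
    intro i
    rw [mulVec_mulVec, hMD i, sub_mulVec, dotProduct_sub, hEdot i, zero_sub, hDT]
  -- compute each second-derivative term
  have hterm2 : ∀ j, φ ⬝ᵥ M *ᵥ (D2 j *ᵥ φ)
      = -((D j *ᵥ φ) ⬝ᵥ M *ᵥ (D j *ᵥ φ)) - φ ⬝ᵥ R j *ᵥ φ := by
    intro j
    rw [mulVec_mulVec, hcompat j, sub_mulVec, add_mulVec, neg_mulVec,
      dotProduct_sub, dotProduct_add, dotProduct_neg, ← mulVec_mulVec (M := E j),
      hEdot j, add_zero]
    congr 1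
    rw [mulVec_mulVec, Matrix.mul_assoc, ← Matrix.mul_assoc, ← mulVec_mulVec, hDT, mulVec_mulVec]
  -- combine into the key identity
  have hiden : ∑ i, (D i *ᵥ φ) ⬝ᵥ M *ᵥ B i
      = -(∑ j, (D j *ᵥ φ) ⬝ᵥ M *ᵥ (D j *ᵥ φ)) - ∑ j, φ ⬝ᵥ R j *ᵥ φ := by
    have h := hkey
    rw [mulVec_add, dotProduct_add, Fin.sum_univ_three, Fin.sum_univ_three] at h
    simp only [mulVec_add, dotProduct_add] at h
    rw [hterm1 0, hterm1 1, hterm1 2, hterm2 0, hterm2 1, hterm2 2] at h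
    rw [Fin.sum_univ_three, Fin.sum_univ_three, Fin.sum_univ_three]
    linarith
  refine ⟨part1, ?_, ?_⟩
  · intro i
    have : (fun a => B i a + (D i).mulVec φ a) = B i + D i *ᵥ φ := rfl
    rw [this, mulVec_add, dotProduct_add, part1, add_zero]
  · have hRpos : ∀ j, 0 ≤ φ ⬝ᵥ R j *ᵥ φ := fun j => by simpa using (hR j).dotProduct_mulVec_nonneg φ
    have hexp : ∀ i, (fun a => B i a + (D i).mulVec φ a) ⬝ᵥ
        M.mulVec (fun a => B i a + (D i).mulVec φ a)
        = B i ⬝ᵥ M *ᵥ B i + 2 * ((D i *ᵥ φ) ⬝ᵥ M *ᵥ B i)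
          + (D i *ᵥ φ) ⬝ᵥ M *ᵥ (D i *ᵥ φ) := by
      intro i
      have h1 : (fun a => B i a + (D i).mulVec φ a) = B i + D i *ᵥ φ := rfl
      rw [h1, mulVec_add, dotProduct_add, add_dotProduct, add_dotProduct,
        hMbil (B i) (D i *ᵥ φ)]
      ring
    rw [Finset.sum_congr rfl (fun i _ => hexp i)]
    rw [Finset.sum_add_distrib, Finset.sum_add_distrib, ← Finset.mul_sum, hiden]
    have hRsum : 0 ≤ ∑ j, φ ⬝ᵥ R j *ᵥ φ := Finset.sum_nonneg fun j _ => hRpos j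
    linarith
end

section
/- Let ι be a finite index set, M ∈ ℝ^{ι×ι} diagonal positive definite, and D₁, D₂, D₃ ∈ ℝ^{ι×ι} with D_j 𝟙 = 0. Equip V := (ℝ^ι)³ with ⟨B,C⟩ := Σ_i B_iᵀ M C_i and ℝ^ι with ⟨ψ,χ⟩ := ψᵀ M χ; define the discrete divergence div : V → ℝ^ι by div B := Σ_i D_i B_i and its adjoint div* : ℝ^ι → V, (div* ψ)_i = M⁻¹ D_iᵀ M ψ. Then for every B ∈ V: (i) there exists φ ∈ ℝ^ι with (div ∘ div*) φ = div B; (ii) for any such φ, β := −div* φ satisfies div(B + β) = 0; (iii) for every b ∈ V with div b = −div B, one has ‖b‖ ≥ ‖β‖ (β is the least-norm correction); (iv) 𝟙ᵀ M β_i = 0 for each i, so the total magnetic field is conserved componentwise under B ↦ B + β; and (v) ‖B‖² = ‖B + β‖² + ‖β‖², so the magnetic energy can only decrease. -/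
open Matrix

/-- The discrete divergence `div B = Σ_i D_i B_i` of a grid-function triple. -/
def ddiv {ι : Type} [Fintype ι] (D : Fin 3 → Matrix ι ι ℝ)
    (B : Fin 3 → ι → ℝ) : ι → ℝ :=
  ∑ i, (D i).mulVec (B i)

/-- The adjoint `div*` of the discrete divergence with respect to the `M`-weighted inner
products: `(div* ψ)_i = M⁻¹ D_iᵀ M ψ`. -/
noncomputable def ddivStar {ι : Type} [Fintype ι] [DecidableEq ι]
    (M : Matrix ι ι ℝ) (D : Fin 3 → Matrix ι ι ℝ) (ψ : ι → ℝ) : Fin 3 → ι → ℝ :=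
  fun i => (M⁻¹ * (D i)ᵀ * M).mulVec ψ

section Aux

variable {ι : Type} [Fintype ι]

/-- dotProduct with a fixed left vector commutes with finite sums of vectors. -/
lemma dot_sum_right (ψ : ι → ℝ) (f : Fin 3 → ι → ℝ) :
    ψ ⬝ᵥ (∑ i, f i) = ∑ i, ψ ⬝ᵥ f i := by
  simp only [dotProduct, Finset.sum_apply, Finset.mul_sum]
  exact Finset.sum_comm

/-- `mulVec` commutes with finite sums of matrices. -/
lemma sum_mulVec' (A : Fin 3 → Matrix ι ι ℝ) (ψ : ι → ℝ) :
    (∑ i, A i) *ᵥ ψ = ∑ i, (A i) *ᵥ ψ :=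
  map_sum (Matrix.mulVec.addMonoidHomLeft ψ) A Finset.univ

/-- The adjoint identity: `⟨(div* ψ)_i, M y⟩ = ⟨ψ, M (D_i y)⟩`. -/
lemma adj_single [DecidableEq ι] (M : Matrix ι ι ℝ) (hMsymm : Mᵀ = M) (hMl : M⁻¹ * M = 1)
    (D : Fin 3 → Matrix ι ι ℝ) (ψ : ι → ℝ) (i : Fin 3) (y : ι → ℝ) :
    (ddivStar M D ψ i) ⬝ᵥ M *ᵥ y = ψ ⬝ᵥ M *ᵥ ((D i) *ᵥ y) := by
  have hPT : (M⁻¹ * (D i)ᵀ * M)ᵀ = M * D i * M⁻¹ := by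
    rw [transpose_mul, transpose_mul, transpose_transpose, transpose_nonsing_inv, hMsymm,
      mul_assoc]
  have h1 : ddivStar M D ψ i = ψ ᵥ* (M * D i * M⁻¹) := by
    rw [ddivStar, ← hPT, ← mulVec_transpose, transpose_transpose]
  rw [h1, ← dotProduct_mulVec, mulVec_mulVec, Matrix.mul_assoc, hMl, Matrix.mul_one,
    ← mulVec_mulVec]

end Aux

/-- Divergence cleaning via the least-norm correction: a solution `φ` of
`(div ∘ div*) φ = div B` exists; for any such `φ`, the correction `β = −div* φ` makes
`B + β` divergence free, is the least-norm solution of `div β = −div B`, conserves the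
total magnetic field componentwise, and satisfies `‖B‖² = ‖B + β‖² + ‖β‖²`, so the
magnetic energy can only decrease. -/
theorem projection_least_norm
    {ι : Type} [Fintype ι] [DecidableEq ι]
    (M : Matrix ι ι ℝ) (hMdiag : M.IsDiag) (hMpos : M.PosDef)
    (D : Fin 3 → Matrix ι ι ℝ)
    (hconsistent : ∀ j, (D j).mulVec (fun _ => (1:ℝ)) = 0)
    (B : Fin 3 → ι → ℝ) :
    (∃ φ : ι → ℝ, ddiv D (ddivStar M D φ) = ddiv D B)
    ∧ ∀ φ : ι → ℝ, ddiv D (ddivStar M D φ) = ddiv D B →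
        (ddiv D (fun i => B i + (fun a => -(ddivStar M D φ i a))) = 0)
        ∧ (∀ b : Fin 3 → ι → ℝ, ddiv D b = -ddiv D B →
            Real.sqrt (∑ i, b i ⬝ᵥ M.mulVec (b i))
              ≥ Real.sqrt (∑ i, (fun a => -(ddivStar M D φ i a)) ⬝ᵥ
                  M.mulVec (fun a => -(ddivStar M D φ i a))))
        ∧ (∀ i, (fun _ => (1:ℝ)) ⬝ᵥ M.mulVec (fun a => -(ddivStar M D φ i a)) = 0)
        ∧ (∑ i, B i ⬝ᵥ M.mulVec (B i))
            = (∑ i, (fun a => B i a - ddivStar M D φ i a) ⬝ᵥ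
                M.mulVec (fun a => B i a - ddivStar M D φ i a))
              + (∑ i, (fun a => -(ddivStar M D φ i a)) ⬝ᵥ
                  M.mulVec (fun a => -(ddivStar M D φ i a))) := by
  classical
  have hMsymm : Mᵀ = M := hMdiag.isSymm
  have hMl : M⁻¹ * M = 1 := Matrix.nonsing_inv_mul M hMpos.det_pos.ne'.isUnit
  have hMr : M * M⁻¹ = 1 := Matrix.mul_nonsing_inv M hMpos.det_pos.ne'.isUnit
  have hM' : M = diagonal M.diag := hMdiag.diagonal_diag.symm
  have hdpos : ∀ a, 0 < M a a := by
    have hMpos' := hMpos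
    rw [hM'] at hMpos'
    intro a; exact (posDef_diagonal_iff.mp hMpos') a
  -- square root of M
  set s : ι → ℝ := fun a => Real.sqrt (M a a) with hs
  have hspos : ∀ a, 0 < s a := fun a => Real.sqrt_pos.mpr (hdpos a)
  set N : Matrix ι ι ℝ := diagonal s with hN
  set Ninv : Matrix ι ι ℝ := diagonal (fun a => (s a)⁻¹) with hNinv
  have hNlinv : Ninv * N = 1 := by
    have h1 : (fun a => (s a)⁻¹ * s a) = fun _ => (1:ℝ) :=
      funext fun a => inv_mul_cancel₀ (hspos a).ne'
    rw [hNinv, hN, diagonal_mul_diagonal, h1, diagonal_one]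
  have hNN : Ninv * Ninv = M⁻¹ := by
    symm
    apply Matrix.inv_eq_left_inv
    have key : ∀ a, (s a)⁻¹ * (s a)⁻¹ * M.diag a = 1 := by
      intro a
      have hss : s a * s a = M a a := Real.mul_self_sqrt (hdpos a).le
      have hd : M.diag a = M a a := rfl
      rw [hd, ← hss, ← mul_inv]
      exact inv_mul_cancel₀ (mul_pos (hspos a) (hspos a)).ne'
    calc Ninv * Ninv * M = Ninv * Ninv * diagonal M.diag := by rw [← hM']
      _ = 1 := by
          rw [hNinv, diagonal_mul_diagonal, diagonal_mul_diagonal,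
            show (fun a => (s a)⁻¹ * (s a)⁻¹ * M.diag a) = fun _ => (1:ℝ) from funext key,
            diagonal_one]
  -- the matrix of div ∘ div*
  set K : Matrix ι ι ℝ := ∑ i, D i * M⁻¹ * (D i)ᵀ with hK
  have hAform : ∀ ψ : ι → ℝ, ddiv D (ddivStar M D ψ) = (K * M) *ᵥ ψ := by
    intro ψ
    rw [ddiv]
    have h1 : ∀ i : Fin 3, (D i) *ᵥ (ddivStar M D ψ i) = (D i * M⁻¹ * (D i)ᵀ * M) *ᵥ ψ := by
      intro i
      rw [ddivStar, mulVec_mulVec]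
      noncomm_ring
    rw [Finset.sum_congr rfl fun i _ => h1 i, hK, Finset.sum_mul, sum_mulVec']
  -- existence of φ
  set F : Matrix ι (Fin 3 × ι) ℝ := Matrix.of (fun a p => (D p.1 * Ninv) a p.2) with hF
  have hKF : K = F * Fᵀ := by
    have h1 : ∀ i : Fin 3, D i * M⁻¹ * (D i)ᵀ = (D i * Ninv) * (D i * Ninv)ᵀ := by
      intro i
      rw [transpose_mul, hNinv, diagonal_transpose]
      rw [show (D i * diagonal fun a => (s a)⁻¹) * (diagonal (fun a => (s a)⁻¹) * (D i)ᵀ)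
          = D i * ((diagonal fun a => (s a)⁻¹) * diagonal (fun a => (s a)⁻¹)) * (D i)ᵀ by
        noncomm_ring]
      rw [← hNinv, hNN]
    rw [hK, Finset.sum_congr rfl fun i _ => h1 i]
    ext a c
    rw [Matrix.mul_apply, Fintype.sum_prod_type]
    rw [Matrix.sum_apply]
    refine Finset.sum_congr rfl fun i _ => ?_
    rw [Matrix.mul_apply]
    refine Finset.sum_congr rfl fun b _ => ?_
    simp [hF]
  have hrange : LinearMap.range (F * Fᵀ).mulVecLin = LinearMap.range F.mulVecLin := by
    have hle : LinearMap.range (F * Fᵀ).mulVecLin ≤ LinearMap.range F.mulVecLin := by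
      rw [Matrix.mulVecLin_mul]
      exact LinearMap.range_comp_le_range _ _
    refine Submodule.eq_of_le_of_finrank_eq hle ?_
    have := Matrix.rank_self_mul_transpose F
    simpa [Matrix.rank] using this
  have hdivB_mem : ddiv D B ∈ LinearMap.range F.mulVecLin := by
    refine ⟨fun p => (N *ᵥ (B p.1)) p.2, ?_⟩
    rw [Matrix.mulVecLin_apply]
    funext a
    rw [Matrix.mulVec, dotProduct, Fintype.sum_prod_type]
    rw [ddiv, Finset.sum_apply]
    refine Finset.sum_congr rfl fun i _ => ?_
    calc ∑ b, F a (i, b) * (N *ᵥ B i) b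
        = ((D i * Ninv) *ᵥ (N *ᵥ B i)) a := rfl
      _ = ((D i * Ninv * N) *ᵥ B i) a := by rw [mulVec_mulVec]
      _ = ((D i) *ᵥ B i) a := by rw [Matrix.mul_assoc, hNlinv, Matrix.mul_one]
  have hexist : ∃ φ : ι → ℝ, ddiv D (ddivStar M D φ) = ddiv D B := by
    rw [← hKF] at hrange
    rw [← hrange] at hdivB_mem
    obtain ⟨ψ, hψ⟩ := hdivB_mem
    refine ⟨M⁻¹ *ᵥ ψ, ?_⟩
    rw [hAform, mulVec_mulVec, Matrix.mul_assoc, hMr, Matrix.mul_one]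
    rw [Matrix.mulVecLin_apply] at hψ
    exact hψ
  refine ⟨hexist, ?_⟩
  intro φ hφ
  set β : Fin 3 → ι → ℝ := ddivStar M D φ with hβ
  -- symmetry of the M-inner product
  have hsym : ∀ u v : ι → ℝ, u ⬝ᵥ M *ᵥ v = v ⬝ᵥ M *ᵥ u := by
    intro u v
    rw [dotProduct_mulVec, ← mulVec_transpose, hMsymm, dotProduct_comm]
  have hpsd : ∀ v : ι → ℝ, 0 ≤ v ⬝ᵥ M *ᵥ v := by
    intro v
    have := hMpos.posSemidef.dotProduct_mulVec_nonneg v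
    simpa using this
  -- adjoint identity, summed
  have hadj : ∀ x : Fin 3 → ι → ℝ,
      ∑ i, (β i) ⬝ᵥ M *ᵥ (x i) = φ ⬝ᵥ M *ᵥ (ddiv D x) := by
    intro x
    have h1 : ∀ i : Fin 3, (β i) ⬝ᵥ M *ᵥ (x i) = φ ⬝ᵥ M *ᵥ ((D i) *ᵥ (x i)) :=
      fun i => adj_single M hMsymm hMl D φ i (x i)
    rw [Finset.sum_congr rfl fun i _ => h1 i, ddiv]
    have h2 := map_sum M.mulVecLin (fun i : Fin 3 => (D i) *ᵥ (x i)) Finset.univ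
    simp only [Matrix.mulVecLin_apply] at h2
    rw [h2, dot_sum_right]
  have hneg : ∀ i : Fin 3, (fun a => -(β i a)) ⬝ᵥ M *ᵥ (fun a => -(β i a))
      = (β i) ⬝ᵥ M *ᵥ (β i) := by
    intro i
    have h1 : (fun a => -(β i a)) = -(β i) := rfl
    rw [h1, mulVec_neg, neg_dotProduct, dotProduct_neg, neg_neg]
  -- ⟨β, β⟩ = ⟨φ, div B⟩
  have hββ : ∑ i, (β i) ⬝ᵥ M *ᵥ (β i) = φ ⬝ᵥ M *ᵥ (ddiv D B) := by
    rw [hadj β, hφ]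
  constructor
  · -- (ii) divergence free
    have hterm : ∀ i : Fin 3, (D i) *ᵥ (B i + fun a => -(β i a))
        = (D i) *ᵥ (B i) - (D i) *ᵥ (β i) := by
      intro i
      have h1 : (B i + fun a => -(β i a)) = B i - β i := by
        funext a'; simp [sub_eq_add_neg]
      rw [h1, mulVec_sub]
    show ∑ i : Fin 3, (D i) *ᵥ (B i + fun a => -(β i a)) = 0
    rw [Finset.sum_congr rfl fun i _ => hterm i, Finset.sum_sub_distrib,
      ← ddiv, ← ddiv, hφ, sub_self]
  refine ⟨?_, ?_, ?_⟩
  · -- (iii) least norm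
    intro b hb
    rw [Finset.sum_congr rfl fun i _ => hneg i]
    apply Real.sqrt_le_sqrt
    have hβb : ∑ i, (β i) ⬝ᵥ M *ᵥ (b i) = -(φ ⬝ᵥ M *ᵥ (ddiv D B)) := by
      rw [hadj b, hb, mulVec_neg, dotProduct_neg]
    have hexp : ∀ i : Fin 3, (b i + β i) ⬝ᵥ M *ᵥ (b i + β i)
        = (b i) ⬝ᵥ M *ᵥ (b i) + 2 * ((β i) ⬝ᵥ M *ᵥ (b i)) + (β i) ⬝ᵥ M *ᵥ (β i) := by
      intro i
      simp only [mulVec_add, dotProduct_add, add_dotProduct]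
      rw [show (b i) ⬝ᵥ M *ᵥ (β i) = (β i) ⬝ᵥ M *ᵥ (b i) from hsym _ _]
      ring
    have hsum : ∑ i, (b i + β i) ⬝ᵥ M *ᵥ (b i + β i)
        = ∑ i, (b i) ⬝ᵥ M *ᵥ (b i) + 2 * (∑ i, (β i) ⬝ᵥ M *ᵥ (b i))
          + ∑ i, (β i) ⬝ᵥ M *ᵥ (β i) := by
      rw [Finset.sum_congr rfl fun i _ => hexp i, Finset.sum_add_distrib,
        Finset.sum_add_distrib, ← Finset.mul_sum]
    have hnn : 0 ≤ ∑ i, (b i + β i) ⬝ᵥ M *ᵥ (b i + β i) :=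
      Finset.sum_nonneg fun i _ => hpsd _
    rw [hβb, hββ] at hsum
    linarith
  · -- (iv) conservation
    intro i
    have h1 : (fun a => -(β i a)) = -(β i) := rfl
    rw [h1, mulVec_neg, dotProduct_neg, neg_eq_zero, hsym,
      show (β i) ⬝ᵥ M *ᵥ (fun _ => (1:ℝ)) = φ ⬝ᵥ M *ᵥ ((D i) *ᵥ (fun _ => (1:ℝ))) from
        adj_single M hMsymm hMl D φ i _,
      hconsistent i]
    simp
  · -- (v) energy identity
    have hβB : ∑ i, (β i) ⬝ᵥ M *ᵥ (B i) = φ ⬝ᵥ M *ᵥ (ddiv D B) := hadj B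
    have hexp : ∀ i : Fin 3, (fun a => B i a - β i a) ⬝ᵥ M *ᵥ (fun a => B i a - β i a)
        = (B i) ⬝ᵥ M *ᵥ (B i) - 2 * ((β i) ⬝ᵥ M *ᵥ (B i)) + (β i) ⬝ᵥ M *ᵥ (β i) := by
      intro i
      have h1 : (fun a => B i a - β i a) = B i - β i := rfl
      rw [h1]
      simp only [mulVec_sub, dotProduct_sub, sub_dotProduct]
      rw [show (B i) ⬝ᵥ M *ᵥ (β i) = (β i) ⬝ᵥ M *ᵥ (B i) from hsym _ _]
      ring
    rw [Finset.sum_congr rfl fun i _ => hexp i, Finset.sum_congr rfl fun i _ => hneg i,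
      Finset.sum_add_distrib, Finset.sum_sub_distrib, ← Finset.mul_sum, hβB, hββ]
    ring
end

section
/- Define B : ℝ³ → ℝ³ by B(x,y,z) = ( x + 2x(1−y²)(1−z²), −y + 2y(1−x²)(1−z²), 2z(1−x²)(1−y²) ), φ(x,y,z) = (1−x²)(1−y²)(1−z²), and B̃(x,y,z) = (x, −y, 0). Then: (i) ∇φ(x,y,z) = ( −2x(1−y²)(1−z²), −2y(1−x²)(1−z²), −2z(1−x²)(1−y²) ) and B + ∇φ = B̃; (ii) Δφ + ∇·B = 0 on ℝ³ and ∇·B̃ = 0; (iii) φ vanishes on the boundary of the cube [−1,1]³; and (iv) for every x ∈ (−1,1) with x ≠ 0: |B̃(x,−1,0)|² = x² + 1 > x² + (2x²−1)² = |B(x,−1,0)|². In particular, the divergence-cleaning projection B ↦ B + ∇φ can increase |B|² pointwise even though it does not increase ∫|B|². -/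
/-- The magnetic field of the counterexample. -/
noncomputable def Bex (p : Fin 3 → ℝ) : Fin 3 → ℝ :=
  ![p 0 + 2 * p 0 * (1 - (p 1) ^ 2) * (1 - (p 2) ^ 2),
    -(p 1) + 2 * p 1 * (1 - (p 0) ^ 2) * (1 - (p 2) ^ 2),
    2 * p 2 * (1 - (p 0) ^ 2) * (1 - (p 1) ^ 2)]

/-- The correction potential of the counterexample. -/
noncomputable def φex (p : Fin 3 → ℝ) : ℝ :=
  (1 - (p 0) ^ 2) * (1 - (p 1) ^ 2) * (1 - (p 2) ^ 2)

/-- The projected (divergence free) magnetic field of the counterexample. -/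
noncomputable def Btilex (p : Fin 3 → ℝ) : Fin 3 → ℝ :=
  ![p 0, -(p 1), 0]

lemma pd_eq {f : (Fin 3 → ℝ) → ℝ} {f' : (Fin 3 → ℝ) →L[ℝ] ℝ} {p : Fin 3 → ℝ}
    (h : HasFDerivAt f f' p) (j : Fin 3) : pd f j p = f' (Pi.single j 1) := by
  rw [pd, h.fderiv]

lemma hcoord (i : Fin 3) (p : Fin 3 → ℝ) :
    HasFDerivAt (fun q : Fin 3 → ℝ => q i)
      (ContinuousLinearMap.proj (R := ℝ) (φ := fun _ : Fin 3 => ℝ) i) p :=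
  hasFDerivAt_apply i p

lemma gradφ (p : Fin 3 → ℝ) (i : Fin 3) :
    pd φex i p
      = ![-(2 * p 0 * (1 - (p 1) ^ 2) * (1 - (p 2) ^ 2)),
          -(2 * p 1 * (1 - (p 0) ^ 2) * (1 - (p 2) ^ 2)),
          -(2 * p 2 * (1 - (p 0) ^ 2) * (1 - (p 1) ^ 2))] i := by
  have hA : HasFDerivAt (fun q : Fin 3 → ℝ => 1 - q 0 * q 0) _ p :=
    ((hcoord 0 p).mul (hcoord 0 p)).const_sub 1
  have hB : HasFDerivAt (fun q : Fin 3 → ℝ => 1 - q 1 * q 1) _ p :=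
    ((hcoord 1 p).mul (hcoord 1 p)).const_sub 1
  have hC : HasFDerivAt (fun q : Fin 3 → ℝ => 1 - q 2 * q 2) _ p :=
    ((hcoord 2 p).mul (hcoord 2 p)).const_sub 1
  have e : φex = fun q : Fin 3 → ℝ => (1 - q 0 * q 0) * (1 - q 1 * q 1) * (1 - q 2 * q 2) := by
    funext q; simp [φex]; ring
  have hφ : HasFDerivAt φex _ p := e ▸ (show HasFDerivAt (fun q : Fin 3 → ℝ => (1 - q 0 * q 0) * (1 - q 1 * q 1) * (1 - q 2 * q 2)) _ p from (hA.mul hB).mul hC)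
  rw [pd_eq hφ]
  fin_cases i <;> simp [Pi.single_apply] <;> ring

/-- The divergence-cleaning projection `B ↦ B + ∇φ` can increase `|B|²` pointwise even
though it does not increase `∫|B|²`: explicit counterexample on the cube `[−1,1]³`. -/
theorem projection_can_increase_pointwise_energy :
    (∀ p : Fin 3 → ℝ, ∀ i,
      pd φex i p
        = ![-(2 * p 0 * (1 - (p 1) ^ 2) * (1 - (p 2) ^ 2)),
            -(2 * p 1 * (1 - (p 0) ^ 2) * (1 - (p 2) ^ 2)),
            -(2 * p 2 * (1 - (p 0) ^ 2) * (1 - (p 1) ^ 2))] i)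
    ∧ (∀ p : Fin 3 → ℝ, ∀ i, Bex p i + pd φex i p = Btilex p i)
    ∧ (∀ p : Fin 3 → ℝ,
        (∑ j, pd (fun y => pd φex j y) j p) + (∑ j, pd (fun y => Bex y j) j p) = 0)
    ∧ (∀ p : Fin 3 → ℝ, (∑ j, pd (fun y => Btilex y j) j p) = 0)
    ∧ (∀ p ∈ (Set.Icc (fun _ => -1) (fun _ => 1) : Set (Fin 3 → ℝ)) \
          Set.pi Set.univ (fun _ => Set.Ioo (-1:ℝ) 1), φex p = 0)
    ∧ (∀ x : ℝ, x ∈ Set.Ioo (-1:ℝ) 1 → x ≠ 0 →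
        (∑ i, Btilex ![x, -1, 0] i ^ 2) = x ^ 2 + 1
        ∧ x ^ 2 + 1 > x ^ 2 + (2 * x ^ 2 - 1) ^ 2
        ∧ x ^ 2 + (2 * x ^ 2 - 1) ^ 2 = ∑ i, Bex ![x, -1, 0] i ^ 2) := by
  refine ⟨gradφ, ?_, ?_, ?_, ?_, ?_⟩
  · intro p i
    rw [gradφ]
    fin_cases i <;> simp [Bex, Btilex] <;> ring
  · intro p
    -- second derivatives of φex
    have hA : HasFDerivAt (fun q : Fin 3 → ℝ => 1 - q 0 * q 0) _ p :=
      ((hcoord 0 p).mul (hcoord 0 p)).const_sub 1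
    have hB : HasFDerivAt (fun q : Fin 3 → ℝ => 1 - q 1 * q 1) _ p :=
      ((hcoord 1 p).mul (hcoord 1 p)).const_sub 1
    have hC : HasFDerivAt (fun q : Fin 3 → ℝ => 1 - q 2 * q 2) _ p :=
      ((hcoord 2 p).mul (hcoord 2 p)).const_sub 1
    have h2x : HasFDerivAt (fun q : Fin 3 → ℝ => 2 * q 0) _ p := (hcoord 0 p).const_mul 2
    have h2y : HasFDerivAt (fun q : Fin 3 → ℝ => 2 * q 1) _ p := (hcoord 1 p).const_mul 2
    have h2z : HasFDerivAt (fun q : Fin 3 → ℝ => 2 * q 2) _ p := (hcoord 2 p).const_mul 2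
    have e0 : (fun y => pd φex 0 y)
        = fun q : Fin 3 → ℝ => -(2 * q 0 * (1 - q 1 * q 1) * (1 - q 2 * q 2)) := by
      funext q; rw [gradφ]; simp; ring
    have e1 : (fun y => pd φex 1 y)
        = fun q : Fin 3 → ℝ => -(2 * q 1 * (1 - q 0 * q 0) * (1 - q 2 * q 2)) := by
      funext q; rw [gradφ]; simp; ring
    have e2 : (fun y => pd φex 2 y)
        = fun q : Fin 3 → ℝ => -(2 * q 2 * (1 - q 0 * q 0) * (1 - q 1 * q 1)) := by
      funext q; rw [gradφ]; simp; ring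
    have s0 : pd (fun y => pd φex 0 y) 0 p = -(2 * (1 - p 1 ^ 2) * (1 - p 2 ^ 2)) := by
      rw [e0]; erw [pd_eq ((h2x.mul hB).mul hC).neg]
      simp [Pi.single_apply]; ring
    have s1 : pd (fun y => pd φex 1 y) 1 p = -(2 * (1 - p 0 ^ 2) * (1 - p 2 ^ 2)) := by
      rw [e1]; erw [pd_eq ((h2y.mul hA).mul hC).neg]
      simp [Pi.single_apply]; ring
    have s2 : pd (fun y => pd φex 2 y) 2 p = -(2 * (1 - p 0 ^ 2) * (1 - p 1 ^ 2)) := by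
      rw [e2]; erw [pd_eq ((h2z.mul hA).mul hB).neg]
      simp [Pi.single_apply]; ring
    -- divergence of Bex
    have b0 : (fun y => Bex y 0)
        = fun q : Fin 3 → ℝ => q 0 + 2 * q 0 * (1 - q 1 * q 1) * (1 - q 2 * q 2) := by
      funext q; simp [Bex]; ring
    have b1 : (fun y => Bex y 1)
        = fun q : Fin 3 → ℝ => -(q 1) + 2 * q 1 * (1 - q 0 * q 0) * (1 - q 2 * q 2) := by
      funext q; simp [Bex]; ring
    have b2 : (fun y => Bex y 2)
        = fun q : Fin 3 → ℝ => 2 * q 2 * (1 - q 0 * q 0) * (1 - q 1 * q 1) := by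
      funext q; simp [Bex]; ring
    have d0 : pd (fun y => Bex y 0) 0 p = 1 + 2 * (1 - p 1 ^ 2) * (1 - p 2 ^ 2) := by
      rw [b0]; erw [pd_eq ((hcoord 0 p).add ((h2x.mul hB).mul hC))]
      simp [Pi.single_apply]; ring
    have d1 : pd (fun y => Bex y 1) 1 p = -1 + 2 * (1 - p 0 ^ 2) * (1 - p 2 ^ 2) := by
      rw [b1]; erw [pd_eq (((hcoord 1 p).neg).add ((h2y.mul hA).mul hC))]
      simp [Pi.single_apply]; ring
    have d2 : pd (fun y => Bex y 2) 2 p = 2 * (1 - p 0 ^ 2) * (1 - p 1 ^ 2) := by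
      rw [b2]; erw [pd_eq ((h2z.mul hA).mul hB)]
      simp [Pi.single_apply]; ring
    rw [Fin.sum_univ_three, Fin.sum_univ_three, s0, s1, s2, d0, d1, d2]
    ring
  · intro p
    have t0 : (fun y => Btilex y 0) = fun q : Fin 3 → ℝ => q 0 := by
      funext q; simp [Btilex]
    have t1 : (fun y => Btilex y 1) = fun q : Fin 3 → ℝ => -(q 1) := by
      funext q; simp [Btilex]
    have t2 : (fun y => Btilex y 2) = fun _ : Fin 3 → ℝ => (0 : ℝ) := by
      funext q; simp [Btilex]
    have u0 : pd (fun y => Btilex y 0) 0 p = 1 := by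
      rw [t0, pd_eq (hcoord 0 p)]; simp
    have u1 : pd (fun y => Btilex y 1) 1 p = -1 := by
      rw [t1]; erw [pd_eq (hcoord 1 p).neg]; simp
    have u2 : pd (fun y => Btilex y 2) 2 p = 0 := by
      rw [t2, pd_eq (hasFDerivAt_const (0:ℝ) p)]; simp
    rw [Fin.sum_univ_three, u0, u1, u2]
    ring
  · rintro p ⟨⟨hlo, hhi⟩, hnot⟩
    rw [Set.mem_pi] at hnot
    push_neg at hnot
    obtain ⟨i, -, hi⟩ := hnot
    have hlo' := hlo i
    have hhi' := hhi i
    have hsq : p i ^ 2 = 1 := by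
      rcases lt_or_eq_of_le hlo' with h | h
      · rcases lt_or_eq_of_le hhi' with h' | h'
        · exact absurd ⟨h, h'⟩ hi
        · rw [h']; norm_num
      · rw [← h]; norm_num
    have h3 : i = 0 ∨ i = 1 ∨ i = 2 := by fin_cases i <;> simp
    rcases h3 with rfl | rfl | rfl <;> simp only [φex] <;> rw [hsq] <;> ring
  · intro x hx hx0
    have h1 : x ^ 2 < 1 := by
      nlinarith [hx.1, hx.2]
    have h2 : 0 < x ^ 2 := by positivity
    refine ⟨?_, ?_, ?_⟩
    · rw [Fin.sum_univ_three]; simp [Btilex]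
    · nlinarith
    · rw [Fin.sum_univ_three]; simp [Bex]; ring
end
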